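/- arXiv:2408.10077 — 9 statements merged into one kernel-verified Lean document; each statement's English description precedes it below -/
import Mathlib

section
/- In a continuous i.i.d. environment with K ≥ 2 object types, if an allocation rule x: [0,v̄]^K → [0,1]^K satisfies the unit demand condition, the resource constraints, and object-symmetry, and is ex post efficient, then there is a set V′ ⊆ [0,v̄]^K with F(V′) = 1 such that for every valuation vector v ∈ V′ and every object k, x_k(v) > 0 implies v_k = max_{l} v_l (i.e., almost every agent can only receive one of her most-preferred objects). -/
open MeasureTheory
open Filter Set
open scoped ENNReal

/-- The interior `(0, v̄)` of the support of the marginal value distribution. -/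
def Sopen (vbar : EReal) : Set ℝ := {v : ℝ | 0 < v ∧ (v : EReal) < vbar}

/-- The support `[0, v̄)` of the marginal value distribution. -/
def Sfull (vbar : EReal) : Set ℝ := {v : ℝ | 0 ≤ v ∧ (v : EReal) < vbar}

/-- `G` is a marginal value distribution on `[0, v̄)` with `v̄ ∈ (0, ∞]`: a twice
continuously differentiable CDF with `G(0) = 0`, `G(v) → 1` as `v → v̄`, first derivative
(density) `g` positive on `(0, v̄)`, and second derivative `g'`. -/
structure IsMarginal (vbar : EReal) (G g g' : ℝ → ℝ) : Prop where
  vbar_pos : 0 < vbar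
  zero : G 0 = 0
  cont : ContinuousOn G (Sfull vbar)
  tendsto_one : Filter.Tendsto G
    (Filter.comap (fun v : ℝ => (v : EReal)) (nhdsWithin vbar (Set.Iio vbar))) (nhds 1)
  hasDeriv : ∀ v ∈ Sopen vbar, HasDerivAt G (g v) v
  hasDeriv2 : ∀ v ∈ Sopen vbar, HasDerivAt g (g' v) v
  cont_deriv2 : ContinuousOn g' (Sopen vbar)
  density_pos : ∀ v ∈ Sopen vbar, 0 < g v

/-- The valuation space `V = [0, v̄]^K`. -/
def Vspace (vbar : EReal) (K : ℕ) : Set (Fin K → ℝ) :=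
  {v | ∀ k, 0 ≤ v k ∧ (v k : EReal) ≤ vbar}

/-- An allocation rule for the continuous i.i.d. environment: a measurable map from
valuation vectors to allocation probabilities in `[0,1]^K` satisfying the unit demand
condition and the resource constraint (each object type has capacity `m̄/K`, where the
valuation distribution is `F`). -/
def AllocRule (vbar : EReal) (K : ℕ) (mbar : ℝ) (F : Measure (Fin K → ℝ))
    (x : (Fin K → ℝ) → Fin K → ℝ) : Prop :=
  Measurable x ∧
  (∀ v ∈ Vspace vbar K, ∀ k, x v k ∈ Set.Icc (0 : ℝ) 1) ∧
  (∀ v ∈ Vspace vbar K, ∑ k, x v k ≤ 1) ∧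
  (∀ k, (∫ v, x v k ∂F) ≤ mbar / (K : ℝ))

lemma isOpen_Sopen (vbar : EReal) : IsOpen (Sopen vbar) := by
  have h : Sopen vbar = Set.Ioi (0:ℝ) ∩ ((↑) : ℝ → EReal) ⁻¹' (Set.Iio vbar) := rfl
  rw [h]
  exact isOpen_Ioi.inter (isOpen_Iio.preimage continuous_coe_real_ereal)

lemma measurable_indicator_g {vbar : EReal} {G g g' : ℝ → ℝ} (hG : IsMarginal vbar G g g') :
    Measurable ((Sopen vbar).indicator g) := by
  classical
  have hcont : ContinuousOn g (Sopen vbar) := fun t ht =>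
    (hG.hasDeriv2 t ht).continuousAt.continuousWithinAt
  have h := ContinuousOn.measurable_piecewise (g := fun _ => (0:ℝ)) hcont continuousOn_const
    (isOpen_Sopen vbar).measurableSet
  convert h using 1
  funext t
  simp [Set.indicator_apply, Set.piecewise]

lemma marginal_mass {vbar : EReal} {G g g' : ℝ → ℝ} (hG : IsMarginal vbar G g g') :
    ∫⁻ t, ENNReal.ofReal ((Sopen vbar).indicator g t) = 1 := by
  classical
  obtain ⟨a, b, hab, hsub, hanti, hbmono, hcover, ha0, hbT⟩ :
      ∃ a b : ℕ → ℝ, (∀ n, a n ≤ b n) ∧ (∀ n, Set.Icc (a n) (b n) ⊆ Sopen vbar) ∧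
        (∀ n, a (n+1) ≤ a n) ∧ (∀ n, b n ≤ b (n+1)) ∧
        (Sopen vbar ⊆ ⋃ n, Set.Icc (a n) (b n)) ∧
        Tendsto a atTop (nhds 0) ∧
        Tendsto (fun n => ((b n : ℝ) : EReal)) atTop (nhdsWithin vbar (Set.Iio vbar)) := by
    induction vbar with
    | bot => exact absurd hG.vbar_pos (by simp)
    | coe c =>
        have hc : (0:ℝ) < c := by exact_mod_cast hG.vbar_pos
        have hpos : ∀ n : ℕ, (0:ℝ) < (n:ℝ) + 2 := fun n => by positivity
        have hdivpos : ∀ n : ℕ, (0:ℝ) < c / ((n:ℝ)+2) := fun n => div_pos hc (hpos n)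
        have hhalf : ∀ n : ℕ, c / ((n:ℝ)+2) ≤ c / 2 := fun n =>
          div_le_div_of_nonneg_left hc.le (by norm_num) (by linarith [Nat.cast_nonneg (α := ℝ) n])
        refine ⟨fun n => c / ((n:ℝ)+2), fun n => c - c / ((n:ℝ)+2), ?_, ?_, ?_, ?_, ?_, ?_, ?_⟩
        · intro n; have := hhalf n; linarith
        · intro n t ht
          refine ⟨lt_of_lt_of_le (hdivpos n) ht.1, ?_⟩
          have h2 : t < c := by have := ht.2; have := hdivpos n; linarith
          exact EReal.coe_lt_coe_iff.mpr h2
        · intro n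
          apply div_le_div_of_nonneg_left hc.le (hpos n)
          push_cast; linarith
        · intro n
          have : c / ((n:ℝ)+1+2) ≤ c / ((n:ℝ)+2) := by
            apply div_le_div_of_nonneg_left hc.le (hpos n); linarith
          push_cast; linarith
        · intro t ht
          obtain ⟨ht0, htc'⟩ := ht
          have htc : t < c := EReal.coe_lt_coe_iff.mp htc'
          set ε := min t (c - t) with hε
          have hεpos : 0 < ε := lt_min ht0 (by linarith)
          obtain ⟨N, hN⟩ := exists_nat_gt (c / ε)
          have h1 : c / ε < (N:ℝ) + 2 := by linarith
          have h2 : c < ε * ((N:ℝ)+2) := by rwa [div_lt_iff₀ hεpos, mul_comm] at h1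
          have h3 : c / ((N:ℝ)+2) < ε := by rw [div_lt_iff₀ (hpos N)]; nlinarith
          refine Set.mem_iUnion.mpr ⟨N, ?_, ?_⟩
          · exact le_trans h3.le (min_le_left _ _)
          · have := min_le_right t (c - t); have : ε ≤ c - t := this
            simp only []
            linarith [h3]
        · have h1 : Tendsto (fun n : ℕ => c / ((n + 2 : ℕ) : ℝ)) atTop (nhds 0) :=
            (tendsto_const_div_atTop_nhds_zero_nat c).comp (tendsto_add_atTop_nat 2)
          have h2 : (fun n : ℕ => c / ((n:ℝ)+2)) = fun n : ℕ => c / ((n + 2 : ℕ) : ℝ) := by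
            funext n; push_cast; ring
          rw [h2]; exact h1
        · have ha0' : Tendsto (fun n : ℕ => c / ((n:ℝ)+2)) atTop (nhds 0) := by
            have h1 : Tendsto (fun n : ℕ => c / ((n + 2 : ℕ) : ℝ)) atTop (nhds 0) :=
              (tendsto_const_div_atTop_nhds_zero_nat c).comp (tendsto_add_atTop_nat 2)
            have h2 : (fun n : ℕ => c / ((n:ℝ)+2)) = fun n : ℕ => c / ((n + 2 : ℕ) : ℝ) := by
              funext n; push_cast; ring
            rw [h2]; exact h1
          have hb : Tendsto (fun n : ℕ => c - c/((n:ℝ)+2)) atTop (nhds c) := by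
            simpa using ha0'.const_sub c
          apply tendsto_nhdsWithin_of_tendsto_nhds_of_eventually_within
          · exact EReal.tendsto_coe.mpr hb
          · exact Eventually.of_forall fun n =>
              EReal.coe_lt_coe_iff.mpr (by linarith [hdivpos n])
    | top =>
        have hone : ∀ n : ℕ, (1:ℝ) ≤ (n:ℝ) + 1 := fun n => by
          linarith [Nat.cast_nonneg (α := ℝ) n]
        have hinvpos : ∀ n : ℕ, (0:ℝ) < ((n:ℝ)+1)⁻¹ := fun n => by positivity
        refine ⟨fun n => ((n:ℝ)+1)⁻¹, fun n => (n:ℝ)+1, ?_, ?_, ?_, ?_, ?_, ?_, ?_⟩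
        · intro n; exact le_trans (inv_le_one_of_one_le₀ (hone n)) (hone n)
        · intro n t ht
          exact ⟨lt_of_lt_of_le (hinvpos n) ht.1, EReal.coe_lt_top t⟩
        · intro n
          apply inv_anti₀ (by positivity)
          push_cast; linarith
        · intro n; push_cast; linarith
        · intro t ht
          obtain ⟨ht0, -⟩ := ht
          obtain ⟨N, hN⟩ := exists_nat_gt (max (1/t) t)
          have h1t : 1/t < (N:ℝ) + 1 := by
            have := le_max_left (1/t) t; linarith
          have h2 : 1/((N:ℝ)+1) < 1/(1/t) :=
            one_div_lt_one_div_of_lt (by positivity) h1t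
          rw [one_div_one_div] at h2
          refine Set.mem_iUnion.mpr ⟨N, ?_, ?_⟩
          · show ((N:ℝ)+1)⁻¹ ≤ t
            rw [inv_eq_one_div]; exact h2.le
          · show t ≤ (N:ℝ)+1
            have := le_max_right (1/t) t; linarith
        · simpa [one_div] using tendsto_one_div_add_atTop_nhds_zero_nat (𝕜 := ℝ)
        · have h1 : Tendsto (fun n : ℕ => (((n:ℝ)+1 : ℝ) : EReal)) atTop (nhds ⊤) := by
            rw [EReal.tendsto_nhds_top_iff_real]
            intro r
            obtain ⟨N, hN⟩ := exists_nat_gt r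
            filter_upwards [eventually_ge_atTop N] with n hn
            have h2 : (N:ℝ) ≤ n := by exact_mod_cast hn
            exact EReal.coe_lt_coe_iff.mpr (by linarith)
          apply tendsto_nhdsWithin_of_tendsto_nhds_of_eventually_within _ h1
          exact Eventually.of_forall fun n => EReal.coe_lt_top _
  -- now the lintegral computation
  set S := Sopen vbar with hS
  set h : ℝ → ℝ≥0∞ := fun t => ENNReal.ofReal (S.indicator g t) with hh
  have hmeas_ind : Measurable (S.indicator g) := measurable_indicator_g hG
  have hmeash : Measurable h := ENNReal.measurable_ofReal.comp hmeas_ind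
  have hgc : ContinuousOn g S := fun t ht => (hG.hasDeriv2 t ht).continuousAt.continuousWithinAt
  have hGa : Tendsto (fun n => G (a n)) atTop (nhds 0) := by
    have h0mem : (0:ℝ) ∈ Sfull vbar := ⟨le_refl 0, by exact_mod_cast hG.vbar_pos⟩
    have hcw := hG.cont 0 h0mem
    have hamem : ∀ n, a n ∈ Sfull vbar := fun n => by
      have hs := hsub n ⟨le_refl _, hab n⟩
      exact ⟨hs.1.le, hs.2⟩
    have hta : Tendsto a atTop (nhdsWithin 0 (Sfull vbar)) :=
      tendsto_nhdsWithin_iff.mpr ⟨ha0, Eventually.of_forall hamem⟩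
    have := hcw.tendsto.comp hta
    simpa [hG.zero, Function.comp_def] using this
  have hGb : Tendsto (fun n => G (b n)) atTop (nhds 1) := by
    have hcb : Tendsto b atTop
        (Filter.comap (fun v : ℝ => (v : EReal)) (nhdsWithin vbar (Set.Iio vbar))) :=
      tendsto_comap_iff.mpr hbT
    exact hG.tendsto_one.comp hcb
  set fseq : ℕ → ℝ → ℝ≥0∞ := fun n => (Set.Icc (a n) (b n)).indicator h with hfseq
  have hfm : ∀ n, Measurable (fseq n) := fun n => hmeash.indicator measurableSet_Icc
  have hfmono : Monotone fseq := monotone_nat_of_le_succ fun n =>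
    Set.indicator_le_indicator_of_subset (Set.Icc_subset_Icc (hanti n) (hbmono n))
      (fun t => zero_le)
  have hle : ∀ n t, fseq n t ≤ h t := fun n t =>
    Set.indicator_le_self' (fun _ _ => zero_le) t
  have key1 : ∀ t, ⨆ n, fseq n t = h t := by
    intro t
    by_cases ht : t ∈ S
    · obtain ⟨n, hn⟩ := Set.mem_iUnion.mp (hcover ht)
      refine le_antisymm (iSup_le fun m => hle m t) ?_
      refine le_iSup_of_le n ?_
      rw [hfseq]; simp only [Set.indicator_of_mem hn]; exact le_rfl
    · have hz : h t = 0 := by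
        rw [hh]; simp [Set.indicator_of_notMem ht]
      rw [hz]
      exact le_antisymm (iSup_le fun n => (hle n t).trans_eq hz) zero_le
  have step : ∀ n, ∫⁻ t, fseq n t = ENNReal.ofReal (G (b n) - G (a n)) := by
    intro n
    rw [hfseq]
    simp only []
    rw [lintegral_indicator measurableSet_Icc]
    have hIg : ∀ᵐ t ∂volume, t ∈ Set.Icc (a n) (b n) → h t = ENNReal.ofReal (g t) := by
      refine Filter.Eventually.of_forall fun t ht => ?_
      rw [hh]; simp only [Set.indicator_of_mem (hsub n ht)]
    rw [setLIntegral_congr_fun_ae measurableSet_Icc hIg]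
    have hgcI : ContinuousOn g (Set.Icc (a n) (b n)) := hgc.mono (hsub n)
    have hint : IntegrableOn g (Set.Icc (a n) (b n)) volume :=
      hgcI.integrableOn_compact isCompact_Icc
    rw [← ofReal_integral_eq_lintegral_ofReal hint
      ((ae_restrict_iff' measurableSet_Icc).mpr
        (Filter.Eventually.of_forall fun t ht => (hG.density_pos t (hsub n ht)).le))]
    congr 1
    rw [MeasureTheory.integral_Icc_eq_integral_Ioc, ← intervalIntegral.integral_of_le (hab n)]
    exact intervalIntegral.integral_eq_sub_of_hasDerivAt
      (fun t ht => hG.hasDeriv t (hsub n (by rwa [Set.uIcc_of_le (hab n)] at ht)))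
      ((by rwa [Set.uIcc_of_le (hab n)] : ContinuousOn g (Set.uIcc (a n) (b n))).intervalIntegrable)
  have hc_mono : Monotone fun n => ∫⁻ t, fseq n t := fun n m hnm =>
    lintegral_mono (hfmono hnm)
  have hc_tend : Tendsto (fun n => ∫⁻ t, fseq n t) atTop (nhds 1) := by
    have h2 : Tendsto (fun n => G (b n) - G (a n)) atTop (nhds 1) := by
      simpa using hGb.sub hGa
    have h3 : Tendsto (fun n => ENNReal.ofReal (G (b n) - G (a n))) atTop
        (nhds (ENNReal.ofReal 1)) := (ENNReal.continuous_ofReal.tendsto 1).comp h2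
    rw [ENNReal.ofReal_one] at h3
    have heq : (fun n => ∫⁻ t, fseq n t) = fun n => ENNReal.ofReal (G (b n) - G (a n)) :=
      funext step
    rw [heq]; exact h3
  have hsup : (⨆ n, ∫⁻ t, fseq n t) = 1 :=
    tendsto_nhds_unique (tendsto_atTop_iSup hc_mono) hc_tend
  calc ∫⁻ t, h t = ∫⁻ t, ⨆ n, fseq n t := by simp_rw [key1]
    _ = ⨆ n, ∫⁻ t, fseq n t := lintegral_iSup hfm hfmono
    _ = 1 := hsup

lemma withDensity_measurePreserving {α : Type*} [MeasurableSpace α] {μ : Measure α}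
    (e : α ≃ᵐ α) (hp : MeasurePreserving e μ μ) {d : α → ℝ≥0∞} (hd : Measurable d)
    (hde : ∀ v, d (e v) = d v) :
    MeasurePreserving e (μ.withDensity d) (μ.withDensity d) := by
  refine ⟨e.measurable, ?_⟩
  ext s hs
  rw [Measure.map_apply e.measurable hs, withDensity_apply _ (e.measurable hs),
    withDensity_apply _ hs]
  have hind : ∀ v, (⇑e ⁻¹' s).indicator d v = s.indicator d (e v) := by
    intro v
    by_cases hv : e v ∈ s <;>
      simp [Set.indicator_apply, Set.mem_preimage, hv, hde]
  calc ∫⁻ v in ⇑e ⁻¹' s, d v ∂μ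
      = ∫⁻ v, (⇑e ⁻¹' s).indicator d v ∂μ := (lintegral_indicator (e.measurable hs) d).symm
    _ = ∫⁻ v, s.indicator d (e v) ∂μ := by simp_rw [hind]
    _ = ∫⁻ v, s.indicator d v ∂μ := hp.lintegral_comp (hd.indicator hs)
    _ = ∫⁻ v in s, d v ∂μ := lintegral_indicator hs d

lemma lintegral_pi_pow (K : ℕ) (f : ℝ → ℝ≥0∞) (hf : Measurable f) :
    ∫⁻ v : Fin K → ℝ, ∏ k, f (v k) = (∫⁻ t, f t) ^ K := by
  induction K with
  | zero => simp [volume_pi, lintegral_const]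
  | succ n ih =>
      have hFm : Measurable fun w : Fin n → ℝ => ∏ j, f (w j) :=
        Finset.measurable_prod _ fun j _ => hf.comp (measurable_pi_apply j)
      have hGm : Measurable fun v : Fin (n+1) → ℝ => ∏ k, f (v k) :=
        Finset.measurable_prod _ fun k _ => hf.comp (measurable_pi_apply k)
      have mp := (measurePreserving_piFinSuccAbove (fun _ : Fin (n+1) => (volume : Measure ℝ)) 0).symm
      have h1 := mp.lintegral_comp (f := fun v : Fin (n+1) → ℝ => ∏ k, f (v k)) hGm
      rw [volume_pi, ← h1]
      have h2 : ∀ p : ℝ × (Fin n → ℝ),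
          (∏ k, f (((MeasurableEquiv.piFinSuccAbove (fun _ : Fin (n+1) => ℝ) 0).symm p) k))
            = f p.1 * ∏ j, f (p.2 j) := by
        intro p
        simp [MeasurableEquiv.piFinSuccAbove_symm_apply, Fin.prod_univ_succ, Fin.insertNth_zero,
          Fin.cons_zero, Fin.cons_succ]
      simp_rw [h2]
      rw [lintegral_prod_mul hf.aemeasurable hFm.aemeasurable, ← volume_pi, ih, pow_succ,
        mul_comm]

/-- In a continuous i.i.d. environment with `K ≥ 2` object types, if an allocation rule
satisfies unit demand, the resource constraints, and object-symmetry, and is ex post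
efficient, then `F`-almost every agent can only receive one of her most-preferred
objects: there is `V' ⊆ V` with `F(V') = 1` such that `x_k(v) > 0` implies
`v_k = max_l v_l` on `V'`. -/
theorem stmt0 (vbar : EReal) (K : ℕ) (hK : 2 ≤ K)
    (G g g' : ℝ → ℝ) (hG : IsMarginal vbar G g g')
    (mbar : ℝ) (hm : mbar ∈ Set.Ioo (0 : ℝ) 1)
    (F : Measure (Fin K → ℝ))
    (hF : F = volume.withDensity fun v =>
      ENNReal.ofReal (∏ k, Set.indicator (Sopen vbar) g (v k)))
    (x : (Fin K → ℝ) → Fin K → ℝ)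
    (hx : AllocRule vbar K mbar F x)
    (hsym : ∀ σ : Equiv.Perm (Fin K), ∀ v ∈ Vspace vbar K, ∀ k,
      x (fun j => v (σ j)) k = x v (σ k))
    (heff : ¬ ∃ x' : (Fin K → ℝ) → Fin K → ℝ, AllocRule vbar K mbar F x' ∧
      (∀ v ∈ Vspace vbar K, ∑ k, v k * x v k ≤ ∑ k, v k * x' v k) ∧
      ∃ V' ⊆ Vspace vbar K, MeasurableSet V' ∧ 0 < F V' ∧
        ∀ v ∈ V', ∑ k, v k * x v k < ∑ k, v k * x' v k) :
    ∃ V' ⊆ Vspace vbar K, MeasurableSet V' ∧ F V' = 1 ∧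
      ∀ v ∈ V', ∀ k, 0 < x v k → ∀ l, v l ≤ v k := by
  classical
  obtain ⟨hxm, hxmem, hxsum, hxres⟩ := hx
  set Ω : Set (Fin K → ℝ) := {v | ∀ j, v j ∈ Sopen vbar} with hΩdef
  have hΩmeas : MeasurableSet Ω := by
    have h : Ω = ⋂ j, (fun v : Fin K → ℝ => v j) ⁻¹' (Sopen vbar) := by
      ext v; simp [hΩdef, Set.mem_iInter]
    rw [h]
    exact MeasurableSet.iInter fun j =>
      (isOpen_Sopen vbar).measurableSet.preimage (measurable_pi_apply j)
  have hΩVs : Ω ⊆ Vspace vbar K := fun v hv k => ⟨(hv k).1.le, (hv k).2.le⟩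
  have hgnn : ∀ t, 0 ≤ (Sopen vbar).indicator g t := fun t =>
    Set.indicator_nonneg (fun s hs => (hG.density_pos s hs).le) t
  have hmeas_ind := measurable_indicator_g hG
  have hd_eq : (fun v : Fin K → ℝ => ENNReal.ofReal (∏ k, Set.indicator (Sopen vbar) g (v k)))
      = fun v => ∏ k, ENNReal.ofReal ((Sopen vbar).indicator g (v k)) := by
    funext v; rw [ENNReal.ofReal_prod_of_nonneg (fun k _ => hgnn (v k))]
  have hdmeas : Measurable
      (fun v : Fin K → ℝ => ENNReal.ofReal (∏ k, Set.indicator (Sopen vbar) g (v k))) := by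
    rw [hd_eq]
    exact Finset.measurable_prod _ fun k _ =>
      (ENNReal.measurable_ofReal.comp hmeas_ind).comp (measurable_pi_apply k)
  have hU : F Set.univ = 1 := by
    rw [hF, withDensity_apply _ MeasurableSet.univ, Measure.restrict_univ, hd_eq,
      lintegral_pi_pow K (fun t => ENNReal.ofReal ((Sopen vbar).indicator g t))
        (ENNReal.measurable_ofReal.comp hmeas_ind), marginal_mass hG, one_pow]
  haveI : IsProbabilityMeasure F := ⟨hU⟩
  have hcompl : F Ωᶜ = 0 := by
    rw [hF, withDensity_apply _ hΩmeas.compl]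
    have hz : ∀ᵐ v ∂(volume : Measure (Fin K → ℝ)), v ∈ Ωᶜ →
        ENNReal.ofReal (∏ k, Set.indicator (Sopen vbar) g (v k)) = 0 := by
      refine Filter.Eventually.of_forall fun v hv => ?_
      obtain ⟨j, hj⟩ : ∃ j, v j ∉ Sopen vbar := by simpa [hΩdef] using hv
      rw [Finset.prod_eq_zero (Finset.mem_univ j) (Set.indicator_of_notMem hj g),
        ENNReal.ofReal_zero]
    rw [setLIntegral_congr_fun_ae hΩmeas.compl hz]
    simp
  have hΩ1 : F Ω = 1 := by
    have h1 : F Ω ≤ 1 := hU ▸ measure_mono (Set.subset_univ _)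
    have h2 : (1:ℝ≥0∞) ≤ F Ω := by
      have h3 := measure_union_le (μ := F) Ω Ωᶜ
      rw [Set.union_compl_self, hU, hcompl, add_zero] at h3
      exact h3
    exact le_antisymm h1 h2
  have hae : ∀ᵐ v ∂F, v ∈ Ω := by
    rw [ae_iff]
    exact hcompl
  have mxj : ∀ j, Measurable fun v => x v j := fun j => (measurable_pi_apply j).comp hxm
  have hBadmeas : ∀ k l : Fin K, MeasurableSet ({v : Fin K → ℝ | 0 < x v k ∧ v k < v l} ∩ Ω) := by
    intro k l
    have h : {v : Fin K → ℝ | 0 < x v k ∧ v k < v l}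
        = {v : Fin K → ℝ | 0 < x v k} ∩ {v | v k < v l} := rfl
    rw [h]
    exact ((measurableSet_lt measurable_const (mxj k)).inter
      (measurableSet_lt (measurable_pi_apply k) (measurable_pi_apply l))).inter hΩmeas
  have key : ∀ k l : Fin K, k ≠ l → F ({v : Fin K → ℝ | 0 < x v k ∧ v k < v l} ∩ Ω) = 0 := by
    intro k l hkl
    by_contra h0
    set B := {v : Fin K → ℝ | 0 < x v k ∧ v k < v l} ∩ Ω with hBdef
    set C := {v : Fin K → ℝ | 0 < x v l ∧ v l < v k} ∩ Ω with hCdef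
    have hBmeas : MeasurableSet B := hBadmeas k l
    have hCmeas : MeasurableSet C := by
      have h : C = {v : Fin K → ℝ | 0 < x v l ∧ v l < v k} ∩ Ω := rfl
      rw [h]; exact hBadmeas l k
    have hBVs : B ⊆ Vspace vbar K := fun v hv => hΩVs hv.2
    have hCVs : C ⊆ Vspace vbar K := fun v hv => hΩVs hv.2
    have hBC : ∀ v, v ∈ B → v ∉ C := fun v hv hc => absurd hv.1.2 (not_lt.mpr hc.1.2.le)
    set T : (Fin K → ℝ) ≃ᵐ (Fin K → ℝ) :=
      MeasurableEquiv.piCongrLeft (fun _ => ℝ) (Equiv.swap k l) with hTdef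
    have hT : ∀ (v : Fin K → ℝ) j, T v j = v (Equiv.swap k l j) := by
      intro v j
      have h1 : T v (Equiv.swap k l ((Equiv.swap k l).symm j))
          = v ((Equiv.swap k l).symm j) := by
        rw [hTdef]
        rw [MeasurableEquiv.coe_piCongrLeft]
        exact Equiv.piCongrLeft_apply_apply (fun _ => ℝ) (Equiv.swap k l) v
          ((Equiv.swap k l).symm j)
      rw [Equiv.apply_symm_apply] at h1
      rw [h1, Equiv.symm_swap]
    have hTfun : ∀ v : Fin K → ℝ, T v = fun j => v (Equiv.swap k l j) := fun v => funext (hT v)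
    have hτk : Equiv.swap k l k = l := Equiv.swap_apply_left k l
    have hτl : Equiv.swap k l l = k := Equiv.swap_apply_right k l
    have hTΩ : ∀ v : Fin K → ℝ, v ∈ Ω ↔ T v ∈ Ω := by
      intro v
      constructor
      · intro hv j; rw [hT]; exact hv _
      · intro hv j
        have h2 := hv (Equiv.swap k l j)
        rw [hT, Equiv.swap_apply_self] at h2
        exact h2
    have hxT : ∀ v ∈ Vspace vbar K, ∀ j, x (T v) j = x v (Equiv.swap k l j) := by
      intro v hv j
      rw [hTfun v]
      exact hsym (Equiv.swap k l) v hv j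
    have hTB : ∀ v ∈ Ω, (T v ∈ B ↔ v ∈ C) := by
      intro v hv
      have hvVs := hΩVs hv
      constructor
      · rintro ⟨⟨h1, h2⟩, -⟩
        rw [hxT v hvVs k, hτk] at h1
        rw [hT, hT, hτk, hτl] at h2
        exact ⟨⟨h1, h2⟩, hv⟩
      · rintro ⟨⟨h1, h2⟩, -⟩
        refine ⟨⟨?_, ?_⟩, (hTΩ v).mp hv⟩
        · rw [hxT v hvVs k, hτk]; exact h1
        · rw [hT, hT, hτk, hτl]; exact h2
    have hTC : ∀ v ∈ Ω, (T v ∈ C ↔ v ∈ B) := by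
      intro v hv
      have hvVs := hΩVs hv
      constructor
      · rintro ⟨⟨h1, h2⟩, -⟩
        rw [hxT v hvVs l, hτl] at h1
        rw [hT, hT, hτk, hτl] at h2
        exact ⟨⟨h1, h2⟩, hv⟩
      · rintro ⟨⟨h1, h2⟩, -⟩
        refine ⟨⟨?_, ?_⟩, (hTΩ v).mp hv⟩
        · rw [hxT v hvVs l, hτl]; exact h1
        · rw [hT, hT, hτk, hτl]; exact h2
    set x' : (Fin K → ℝ) → Fin K → ℝ := fun v j =>
      if v ∈ B then (if j = k then 0 else if j = l then x v k + x v l else x v j)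
      else if v ∈ C then (if j = l then 0 else if j = k then x v k + x v l else x v j)
      else x v j with hx'def
    have hx'B : ∀ v ∈ B, x' v k = 0 ∧ x' v l = x v k + x v l ∧
        ∀ j, j ≠ k → j ≠ l → x' v j = x v j := by
      intro v hv
      refine ⟨?_, ?_, ?_⟩
      · rw [hx'def]; simp [hv]
      · rw [hx'def]; simp [hv, Ne.symm hkl]
      · intro j hjk hjl; rw [hx'def]; simp [hv, hjk, hjl]
    have hx'C : ∀ v ∈ C, x' v l = 0 ∧ x' v k = x v k + x v l ∧
        ∀ j, j ≠ k → j ≠ l → x' v j = x v j := by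
      intro v hv
      have hvB : v ∉ B := fun hb => hBC v hb hv
      refine ⟨?_, ?_, ?_⟩
      · rw [hx'def]; simp [hv, hvB]
      · rw [hx'def]; simp [hv, hvB, hkl]
      · intro j hjk hjl; rw [hx'def]; simp [hv, hvB, hjk, hjl]
    have hx'E : ∀ v, v ∉ B → v ∉ C → ∀ j, x' v j = x v j := by
      intro v h1 h2 j; rw [hx'def]; simp [h1, h2]
    have sumdiff : ∀ (y z : Fin K → ℝ), (∀ j, j ≠ k → j ≠ l → y j = z j) →
        ∑ j, y j - ∑ j, z j = (y k - z k) + (y l - z l) := by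
      intro y z hyz
      rw [← Finset.sum_sub_distrib]
      have h1 : ∑ j, (y j - z j) = ∑ j ∈ ({k, l} : Finset (Fin K)), (y j - z j) := by
        refine (Finset.sum_subset (Finset.subset_univ _) ?_).symm
        intro j _ hj
        simp only [Finset.mem_insert, Finset.mem_singleton] at hj
        push_neg at hj
        rw [hyz j hj.1 hj.2]; ring
      rw [h1, Finset.sum_pair hkl]
    have hsum_pres : ∀ v, ∑ j, x' v j = ∑ j, x v j := by
      intro v
      by_cases hvB : v ∈ B
      · obtain ⟨e1, e2, e3⟩ := hx'B v hvB
        have h1 := sumdiff (x' v) (x v) e3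
        rw [e1, e2] at h1
        linarith
      · by_cases hvC : v ∈ C
        · obtain ⟨e1, e2, e3⟩ := hx'C v hvC
          have h1 := sumdiff (x' v) (x v) e3
          rw [e1, e2] at h1
          linarith
        · exact Finset.sum_congr rfl fun j _ => hx'E v hvB hvC j
    have hsum_pair : ∀ v, x' v k + x' v l = x v k + x v l := by
      intro v
      by_cases hvB : v ∈ B
      · obtain ⟨e1, e2, -⟩ := hx'B v hvB; rw [e1, e2]; ring
      · by_cases hvC : v ∈ C
        · obtain ⟨e1, e2, -⟩ := hx'C v hvC; rw [e1, e2]; ring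
        · rw [hx'E v hvB hvC k, hx'E v hvB hvC l]
    have hvalB : ∀ v ∈ B, ∑ j, v j * x' v j = (∑ j, v j * x v j) + x v k * (v l - v k) := by
      intro v hv
      obtain ⟨e1, e2, e3⟩ := hx'B v hv
      have h1 := sumdiff (fun j => v j * x' v j) (fun j => v j * x v j)
        (fun j hjk hjl => by show v j * x' v j = v j * x v j; rw [e3 j hjk hjl])
      rw [e1, e2] at h1
      nlinarith [h1]
    have hvalC : ∀ v ∈ C, ∑ j, v j * x' v j = (∑ j, v j * x v j) + x v l * (v k - v l) := by
      intro v hv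
      obtain ⟨e1, e2, e3⟩ := hx'C v hv
      have h1 := sumdiff (fun j => v j * x' v j) (fun j => v j * x v j)
        (fun j hjk hjl => by show v j * x' v j = v j * x v j; rw [e3 j hjk hjl])
      rw [e1, e2] at h1
      nlinarith [h1]
    have hpairle : ∀ v ∈ Vspace vbar K, x v k + x v l ≤ 1 := by
      intro v hv
      have h1 : ∑ j ∈ ({k, l} : Finset (Fin K)), x v j ≤ ∑ j, x v j :=
        Finset.sum_le_sum_of_subset_of_nonneg (Finset.subset_univ _)
          (fun j _ _ => (hxmem v hv j).1)
      rw [Finset.sum_pair hkl] at h1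
      exact h1.trans (hxsum v hv)
    have hx'mem : ∀ v ∈ Vspace vbar K, ∀ j, x' v j ∈ Set.Icc (0:ℝ) 1 := by
      intro v hv j
      rw [hx'def]
      beta_reduce
      have hz : (0:ℝ) ∈ Set.Icc (0:ℝ) 1 := Set.mem_Icc.mpr ⟨le_rfl, zero_le_one⟩
      have hs : x v k + x v l ∈ Set.Icc (0:ℝ) 1 := Set.mem_Icc.mpr
        ⟨add_nonneg (hxmem v hv k).1 (hxmem v hv l).1, hpairle v hv⟩
      split_ifs <;> first | exact hz | exact hs | exact hxmem v hv j
    have mx' : Measurable x' := by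
      rw [hx'def]
      apply measurable_pi_lambda
      intro j
      apply Measurable.ite hBmeas
      · split_ifs
        · exact measurable_const
        · exact (mxj k).add (mxj l)
        · exact mxj j
      · apply Measurable.ite hCmeas
        · split_ifs
          · exact measurable_const
          · exact (mxj k).add (mxj l)
          · exact mxj j
        · exact mxj j
    have hinteg : ∀ (y : (Fin K → ℝ) → Fin K → ℝ), Measurable y →
        (∀ v ∈ Vspace vbar K, ∀ j, y v j ∈ Set.Icc (0:ℝ) 1) →
        ∀ j, Integrable (fun v => y v j) F := by
      intro y hy hyb j
      refine (integrable_const (1:ℝ)).mono'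
        ((measurable_pi_apply j).comp hy).aestronglyMeasurable ?_
      filter_upwards [hae] with v hv
      have hmv := hyb v (hΩVs hv) j
      rw [Real.norm_eq_abs, abs_le]
      exact ⟨by linarith [hmv.1], hmv.2⟩
    have hintx := hinteg x hxm hxmem
    have hintx' := hinteg x' mx' hx'mem
    have hdinv : ∀ v : Fin K → ℝ,
        ENNReal.ofReal (∏ i, Set.indicator (Sopen vbar) g (T v i))
          = ENNReal.ofReal (∏ i, Set.indicator (Sopen vbar) g (v i)) := by
      intro v
      rw [hTfun v]
      congr 1
      exact Equiv.prod_comp (Equiv.swap k l) (fun i => Set.indicator (Sopen vbar) g (v i))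
    have mpT : MeasurePreserving T F F := by
      rw [hF]
      exact withDensity_measurePreserving T
        (volume_measurePreserving_piCongrLeft (fun _ => ℝ) (Equiv.swap k l)) hdmeas hdinv
    have hptw : ∀ v ∈ Ω, x' (T v) l = x' v k := by
      intro v hv
      have hvVs := hΩVs hv
      by_cases hvB : v ∈ B
      · have hTC' : T v ∈ C := (hTC v hv).mpr hvB
        have hTB' : T v ∉ B := fun hb => hBC _ hb hTC'
        rw [(hx'C (T v) hTC').1, (hx'B v hvB).1]
      · by_cases hvC : v ∈ C
        · have hTB' : T v ∈ B := (hTB v hv).mpr hvC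
          rw [(hx'B (T v) hTB').2.1, (hx'C v hvC).2.1]
          rw [hxT v hvVs k, hxT v hvVs l, hτk, hτl]
          ring
        · have hTB' : T v ∉ B := fun hb => hvC ((hTB v hv).mp hb)
          have hTC' : T v ∉ C := fun hc => hvB ((hTC v hv).mp hc)
          rw [hx'E (T v) hTB' hTC' l, hx'E v hvB hvC k, hxT v hvVs l, hτl]
    have hkl_int : ∫ v, x' v k ∂F = ∫ v, x' v l ∂F := by
      have h1 : ∫ v, x' v k ∂F = ∫ v, x' (T v) l ∂F :=
        integral_congr_ae (hae.mono fun v hv => (hptw v hv).symm)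
      rw [h1, mpT.integral_comp' (fun w => x' w l)]
    have hsum_int : ∫ v, x' v k ∂F + ∫ v, x' v l ∂F
        = ∫ v, x v k ∂F + ∫ v, x v l ∂F := by
      rw [← integral_add (hintx' k) (hintx' l), ← integral_add (hintx k) (hintx l)]
      exact integral_congr_ae (Filter.Eventually.of_forall fun v => hsum_pair v)
    have hres' : ∀ j, (∫ v, x' v j ∂F) ≤ mbar / K := by
      intro j
      by_cases hjk : j = k
      · subst hjk
        have h1 := hxres j
        have h2 := hxres l
        linarith [hkl_int, hsum_int]
      · by_cases hjl : j = l
        · subst hjl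
          have h1 := hxres k
          have h2 := hxres j
          linarith [hkl_int, hsum_int]
        · have heq : (fun v => x' v j) = fun v => x v j := funext fun v => by
            by_cases h1 : v ∈ B
            · exact (hx'B v h1).2.2 j hjk hjl
            · by_cases h2 : v ∈ C
              · exact (hx'C v h2).2.2 j hjk hjl
              · exact hx'E v h1 h2 j
          rw [heq]
          exact hxres j
    have hweak : ∀ v ∈ Vspace vbar K, ∑ j, v j * x v j ≤ ∑ j, v j * x' v j := by
      intro v hv
      by_cases h1 : v ∈ B
      · rw [hvalB v h1]
        have h2 : 0 ≤ x v k * (v l - v k) := mul_nonneg h1.1.1.le (by linarith [h1.1.2])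
        linarith
      · by_cases h2 : v ∈ C
        · rw [hvalC v h2]
          have h3 : 0 ≤ x v l * (v k - v l) := mul_nonneg h2.1.1.le (by linarith [h2.1.2])
          linarith
        · have h3 : (∑ j, v j * x' v j) = ∑ j, v j * x v j :=
            Finset.sum_congr rfl fun j _ => by rw [hx'E v h1 h2 j]
          exact h3.ge
    have hstrict : ∀ v ∈ B, ∑ j, v j * x v j < ∑ j, v j * x' v j := by
      intro v hv
      rw [hvalB v hv]
      have h1 : 0 < x v k * (v l - v k) := mul_pos hv.1.1 (by linarith [hv.1.2])
      linarith
    exact heff ⟨x', ⟨mx', hx'mem, fun v hv => by rw [hsum_pres v]; exact hxsum v hv, hres'⟩,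
      hweak, B, hBVs, hBmeas, pos_iff_ne_zero.mpr h0, hstrict⟩
  set N : Set (Fin K → ℝ) := ⋃ k, ⋃ l, ({v : Fin K → ℝ | 0 < x v k ∧ v k < v l} ∩ Ω) with hNdef
  have hNmeas : MeasurableSet N :=
    MeasurableSet.iUnion fun k => MeasurableSet.iUnion fun l => hBadmeas k l
  have hN0 : F N = 0 := by
    refine measure_iUnion_null fun k => measure_iUnion_null fun l => ?_
    by_cases hkl : k = l
    · subst hkl
      have h : {v : Fin K → ℝ | 0 < x v k ∧ v k < v k} ∩ Ω = ∅ := by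
        ext v; simp [lt_irrefl]
      rw [h]; exact measure_empty
    · exact key k l hkl
  refine ⟨Ω \ N, fun v hv => hΩVs hv.1, hΩmeas.diff hNmeas, ?_, ?_⟩
  · rw [measure_diff_null hN0]; exact hΩ1
  · intro v hv k hxk l
    by_contra hlt
    push_neg at hlt
    exact hv.2 (Set.mem_iUnion.mpr ⟨k, Set.mem_iUnion.mpr ⟨l, ⟨⟨hxk, hlt⟩, hv.1⟩⟩⟩)
end

section
/- Let r′(v;G_K) denote the derivative with respect to v of the hazard rate of the reduced value distribution G_K. For every v ∈ (0,v̄): (i) if r′(v;G_K) ≥ 0 then r′(v;G_{K+1}) ≥ 0; and (ii) there exists K₀ such that r′(v;G_K) > 0 for all K > K₀. -/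
/-- The hazard rate `g_K(v)/(1 − G_K(v))` of the reduced value distribution
`G_K = G^K` (whose density is `g_K(v) = K g(v) G(v)^{K−1}`). -/
noncomputable def hazK (G g : ℝ → ℝ) (K : ℕ) (v : ℝ) : ℝ :=
  ((K : ℝ) * g v * G v ^ (K - 1)) / (1 - G v ^ K)

/-- AM-GM-type inequality: `(K+1) u^K ≤ 1 + K u^(K+1)` for `u ≥ 0`. -/
theorem bern_aux (u : ℝ) (h0 : 0 ≤ u) : ∀ K : ℕ, ((K:ℝ)+1)*u^K ≤ 1 + K*u^(K+1) := by
  intro K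
  induction K with
  | zero => simp
  | succ n ih =>
    push_cast
    have hp : (0:ℝ) ≤ u ^ n := pow_nonneg h0 n
    have key : (0:ℝ) ≤ ((n:ℝ)+1) * u^n * (1-u)^2 := by positivity
    have e1 : u ^ (n+1) = u^n * u := pow_succ u n
    have e2 : u ^ (n+1+1) = u^n * u * u := by rw [pow_succ, pow_succ]
    rw [e1, e2]; rw [e1] at ih
    nlinarith [ih]

/-- A marginal value distribution is strictly increasing on `[0, v̄)`. -/
theorem Gmono_aux (vbar : EReal) (G g g' : ℝ → ℝ) (hG : IsMarginal vbar G g g') :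
    ∀ x ∈ Sfull vbar, ∀ y ∈ Sfull vbar, x < y → G x < G y := by
  intro x hx y hy hxy
  have hsub : Set.Icc x y ⊆ Sfull vbar := by
    intro z hz
    exact ⟨hx.1.trans hz.1, lt_of_le_of_lt (EReal.coe_le_coe_iff.mpr hz.2) hy.2⟩
  have hopen : Set.Ioo x y ⊆ Sopen vbar := by
    intro z hz
    exact ⟨lt_of_le_of_lt hx.1 hz.1, lt_of_lt_of_le (EReal.coe_lt_coe_iff.mpr hz.2)
      (le_of_lt hy.2)⟩
  have := strictMonoOn_of_deriv_pos (convex_Icc x y) (hG.cont.mono hsub) ?_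
  · exact this (Set.left_mem_Icc.mpr hxy.le) (Set.right_mem_Icc.mpr hxy.le) hxy
  · intro z hz
    rw [interior_Icc] at hz
    rw [(hG.hasDeriv z (hopen hz)).deriv]
    exact hG.density_pos z (hopen hz)

/-- A marginal value distribution is strictly below `1` on `(0, v̄)`. -/
theorem Glt_one_aux (vbar : EReal) (G g g' : ℝ → ℝ) (hG : IsMarginal vbar G g g') :
    ∀ v ∈ Sopen vbar, G v < 1 := by
  intro v hv
  obtain ⟨x, hx1, hx2⟩ := exists_between hv.2
  have hxt : x ≠ ⊤ := ne_top_of_lt (lt_of_lt_of_le hx2 le_top)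
  have hxb : x ≠ ⊥ := ne_bot_of_gt hx1
  set w := x.toReal with hw
  have hwx : (w : EReal) = x := EReal.coe_toReal hxt hxb
  have hvw : v < w := by rw [← EReal.coe_lt_coe_iff, hwx]; exact hx1
  have hwb : (w : EReal) < vbar := by rw [hwx]; exact hx2
  have hw0 : 0 < w := hv.1.trans hvw
  have hNB : (Filter.comap (fun r : ℝ => (r : EReal)) (nhdsWithin vbar (Set.Iio vbar))).NeBot := by
    rw [Filter.comap_neBot_iff]
    intro t ht
    rw [mem_nhdsLT_iff_exists_Ioo_subset' hv.2] at ht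
    obtain ⟨l, hl, hsub⟩ := ht
    obtain ⟨y, hy1, hy2⟩ := exists_between (max_lt hl hv.2 : max l (v:EReal) < vbar)
    have hyt : y ≠ ⊤ := ne_top_of_lt (lt_of_lt_of_le hy2 le_top)
    have hyb : y ≠ ⊥ := ne_bot_of_gt (lt_of_le_of_lt (le_max_right _ _) hy1 : (v:EReal) < y)
    refine ⟨y.toReal, hsub ⟨?_, ?_⟩⟩
    · rw [EReal.coe_toReal hyt hyb]; exact lt_of_le_of_lt (le_max_left _ _) hy1
    · rw [EReal.coe_toReal hyt hyb]; exact hy2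
  have hEv : ∀ᶠ r in Filter.comap (fun r : ℝ => (r : EReal)) (nhdsWithin vbar (Set.Iio vbar)),
      G w ≤ G r := by
    have h1 : Set.Ioi (w : EReal) ∈ nhdsWithin vbar (Set.Iio vbar) :=
      mem_nhdsWithin_of_mem_nhds (isOpen_Ioi.mem_nhds hwb)
    have h2 : Set.Iio vbar ∈ nhdsWithin vbar (Set.Iio vbar) := self_mem_nhdsWithin
    filter_upwards [Filter.preimage_mem_comap h1, Filter.preimage_mem_comap h2] with r hr1 hr2
    have hwr : w < r := EReal.coe_lt_coe_iff.mp hr1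
    exact le_of_lt (Gmono_aux vbar G g g' hG w ⟨hw0.le, hwb⟩ r ⟨(hw0.trans hwr).le, hr2⟩ hwr)
  have hGw : G w ≤ 1 := ge_of_tendsto hG.tendsto_one hEv
  exact lt_of_lt_of_le
    (Gmono_aux vbar G g g' hG v ⟨hv.1.le, hv.2⟩ w ⟨hw0.le, hwb⟩ hvw) hGw

/-- The derivative of the hazard rate of `G_K`, in factored form. -/
theorem hazK_deriv_aux (G g g' : ℝ → ℝ) (v : ℝ)
    (hGd : HasDerivAt G (g v) v) (hgd : HasDerivAt g (g' v) v)
    (hu0 : 0 < G v) (hu1 : G v < 1) :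
    ∀ K : ℕ, 1 ≤ K → deriv (hazK G g K) v =
      ((K:ℝ) * G v ^ (K-1) / (G v * (1 - G v ^ K)^2)) *
        (g' v * G v * (1 - G v ^ K) + g v ^ 2 * ((K:ℝ) - 1 + G v ^ K)) := by
  intro K hK
  have hpK : G v ^ K < 1 := pow_lt_one₀ hu0.le hu1 (Nat.one_le_iff_ne_zero.mp hK)
  have hDne : (1:ℝ) - G v ^ K ≠ 0 := by linarith
  have hmul : HasDerivAt (fun w => (K:ℝ) * g w * G w ^ (K-1))
      (((K:ℝ) * g' v) * G v ^ (K-1) +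
        ((K:ℝ) * g v) * ((K-1 : ℕ) * G v ^ (K-1-1) * g v)) v :=
    (hgd.const_mul (K:ℝ)).mul (hGd.pow (K-1))
  have hD : HasDerivAt (fun w => 1 - G w ^ K) (-((K:ℕ) * G v ^ (K-1) * g v)) v :=
    (hGd.pow K).const_sub 1
  have hdiv := hmul.div hD hDne
  have hhaz : HasDerivAt (hazK G g K)
      (((((K:ℝ) * g' v) * G v ^ (K-1) +
        ((K:ℝ) * g v) * ((K-1 : ℕ) * G v ^ (K-1-1) * g v)) * (1 - G v ^ K) -
        ((K:ℝ) * g v * G v ^ (K-1)) * (-((K:ℕ) * G v ^ (K-1) * g v))) / (1 - G v ^ K)^2) v :=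
    hdiv
  rw [hhaz.deriv]
  have hune : G v ≠ 0 := hu0.ne'
  match K, hK with
  | 1, _ =>
    have h1 : (1:ℝ) - G v ≠ 0 := by simpa using hDne
    norm_num
    field_simp
  | (m+2), _ =>
    have e1 : (m+2) - 1 = m + 1 := rfl
    have e2 : (m+1) - 1 = m := rfl
    rw [e1, e2]
    push_cast
    field_simp
    ring

/-- For every `v ∈ (0, v̄)`: (i) if the derivative of the hazard rate of `G_K` at `v` is
nonnegative then so is that of `G_{K+1}`; and (ii) the derivative of the hazard rate of
`G_K` at `v` is strictly positive for all sufficiently large `K`. -/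
theorem stmt3 (vbar : EReal) (G g g' : ℝ → ℝ) (hG : IsMarginal vbar G g g') :
    ∀ v ∈ Sopen vbar,
      (∀ K : ℕ, 1 ≤ K →
        0 ≤ deriv (hazK G g K) v → 0 ≤ deriv (hazK G g (K + 1)) v) ∧
      ∃ K₀ : ℕ, ∀ K : ℕ, K₀ < K → 0 < deriv (hazK G g K) v := by
  intro v hv
  have ha : 0 < g v := hG.density_pos v hv
  have hu0 : 0 < G v := by
    have := Gmono_aux vbar G g g' hG 0
      ⟨le_rfl, by rw [show ((0:ℝ):EReal) = (0:EReal) by norm_cast]; exact hG.vbar_pos⟩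
      v ⟨hv.1.le, hv.2⟩ hv.1
    rwa [hG.zero] at this
  have hu1 : G v < 1 := Glt_one_aux vbar G g g' hG v hv
  set u := G v with hu
  set a := g v with hadef
  set b := g' v with hbdef
  have key := hazK_deriv_aux G g g' v (hG.hasDeriv v hv) (hG.hasDeriv2 v hv) hu0 hu1
  have hc : ∀ K : ℕ, 1 ≤ K → 0 < (K:ℝ) * u ^ (K-1) / (u * (1 - u ^ K)^2) := by
    intro K hK
    have hpK : u ^ K < 1 := pow_lt_one₀ hu0.le hu1 (by omega)
    exact div_pos (mul_pos (by exact_mod_cast (by omega : 0 < K) : (0:ℝ) < K)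
      (pow_pos hu0 _)) (mul_pos hu0 (pow_pos (by linarith) 2))
  -- the sign-determining factor
  have phi_step : ∀ K : ℕ, 1 ≤ K →
      0 ≤ b * u * (1 - u ^ K) + a ^ 2 * ((K:ℝ) - 1 + u ^ K) →
      0 ≤ b * u * (1 - u ^ (K+1)) + a ^ 2 * (((K:ℝ)+1) - 1 + u ^ (K+1)) := by
    intro K hK h
    have ht0 : 0 < u ^ K := pow_pos hu0 K
    have ht1 : u ^ K < 1 := pow_lt_one₀ hu0.le hu1 (by omega)
    have hK1 : (1:ℝ) ≤ K := by exact_mod_cast hK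
    rw [pow_succ]
    have htu1 : u ^ K * u < 1 := by nlinarith
    rcases le_or_gt 0 b with hb | hb
    · nlinarith [mul_nonneg (mul_nonneg hb hu0.le) (by nlinarith : (0:ℝ) ≤ 1 - u ^ K * u),
        mul_nonneg (sq_nonneg a) (by nlinarith : (0:ℝ) ≤ (K:ℝ) + 1 - 1 + u ^ K * u)]
    · have hbern := bern_aux u hu0.le K
      rw [pow_succ] at hbern
      have h2 : 0 ≤ (b * u * (1 - u ^ K) + a ^ 2 * ((K:ℝ) - 1 + u ^ K)) * (1 - u ^ K * u) :=
        mul_nonneg h (by nlinarith)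
      have h3 : 0 ≤ a ^ 2 * (1 - ((K:ℝ)+1) * u ^ K + K * (u ^ K * u)) :=
        mul_nonneg (sq_nonneg a) (by nlinarith)
      have goalmul : 0 ≤ (b * u * (1 - u ^ K * u) + a ^ 2 * (((K:ℝ)+1) - 1 + u ^ K * u))
          * (1 - u ^ K) := by nlinarith [h2, h3]
      exact (mul_nonneg_iff_of_pos_right (by linarith : (0:ℝ) < 1 - u ^ K)).mp goalmul
  constructor
  · intro K hK hd
    rw [key K hK] at hd
    rw [key (K+1) (by omega)]
    have hφ : 0 ≤ b * u * (1 - u ^ K) + a ^ 2 * ((K:ℝ) - 1 + u ^ K) :=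
      (mul_nonneg_iff_of_pos_left (hc K hK)).mp hd
    have hstep := phi_step K hK hφ
    refine mul_nonneg (hc (K+1) (by omega)).le ?_
    push_cast at hstep ⊢
    linarith [hstep]
  · refine ⟨Nat.ceil (|b| * u / a ^ 2) + 1, fun K hK => ?_⟩
    rw [key K (by omega)]
    refine mul_pos (hc K (by omega)) ?_
    have ht0 : 0 < u ^ K := pow_pos hu0 K
    have ht1 : u ^ K < 1 := pow_lt_one₀ hu0.le hu1 (by omega)
    have hceil : |b| * u / a ^ 2 ≤ (Nat.ceil (|b| * u / a ^ 2) : ℝ) := Nat.le_ceil _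
    have hKc : ((Nat.ceil (|b| * u / a ^ 2) : ℝ) + 2) ≤ (K:ℝ) := by
      exact_mod_cast Nat.succ_le_of_lt hK
    have ha2 : (0:ℝ) < a ^ 2 := by positivity
    have hmul : |b| * u ≤ a ^ 2 * ((Nat.ceil (|b| * u / a ^ 2) : ℝ)) := by
      rw [← div_le_iff₀' ha2]
      exact hceil
    have hbu : -(|b| * u) ≤ b * u * (1 - u ^ K) := by
      nlinarith [mul_nonneg (mul_nonneg (by linarith [neg_abs_le b] : (0:ℝ) ≤ b + |b|) hu0.le)
          (by linarith : (0:ℝ) ≤ 1 - u ^ K),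
        mul_nonneg (mul_nonneg (abs_nonneg b) hu0.le) ht0.le]
    nlinarith [hbu, hmul, mul_le_mul_of_nonneg_left hKc ha2.le, mul_pos ha2 ht0]
end

section
/- If the reduced value distribution G_K has an increasing hazard rate (IHR) on (0,v̄), then for every K′ > K the reduced value distribution G_{K′} also has an IHR. In particular, if the marginal value distribution G itself has an IHR, then G_K has an IHR for every K ≥ 1. -/
open Finset

lemma geom_split (x : ℝ) (m K : ℕ) :
    ∑ i ∈ range (m + K), x ^ i = (∑ i ∈ range m, x ^ i) + x ^ m * ∑ i ∈ range K, x ^ i := by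
  rw [Finset.sum_range_add, Finset.mul_sum]
  simp [pow_add]

lemma geom_pos {x : ℝ} (hx : 0 < x) {n : ℕ} (hn : 1 ≤ n) : 0 < ∑ i ∈ range n, x ^ i :=
  Finset.sum_pos (fun i _ => pow_pos hx i) (Finset.nonempty_range_iff.mpr (by omega))

lemma geom_nonneg {x : ℝ} (hx : 0 ≤ x) (n : ℕ) : 0 ≤ ∑ i ∈ range n, x ^ i :=
  Finset.sum_nonneg fun i _ => pow_nonneg hx i

lemma key_ineq {x y : ℝ} (hx : 0 ≤ x) (hxy : x ≤ y) (m : ℕ) :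
    x ^ m * ∑ i ∈ range m, y ^ i ≤ y ^ m * ∑ i ∈ range m, x ^ i := by
  rw [Finset.mul_sum, Finset.mul_sum]
  refine Finset.sum_le_sum fun i hi => ?_
  rw [Finset.mem_range] at hi
  have hy : 0 ≤ y := hx.trans hxy
  have e1 : x ^ m = x ^ i * x ^ (m - i) := by rw [← pow_add]; congr 1; omega
  have e2 : y ^ m = y ^ i * y ^ (m - i) := by rw [← pow_add]; congr 1; omega
  calc x ^ m * y ^ i = x ^ i * y ^ i * x ^ (m - i) := by rw [e1]; ring
    _ ≤ x ^ i * y ^ i * y ^ (m - i) :=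
        mul_le_mul_of_nonneg_left (pow_le_pow_left₀ hx hxy _) (by positivity)
    _ = y ^ m * x ^ i := by rw [e2]; ring

lemma one_sub_pow (x : ℝ) (n : ℕ) : 1 - x ^ n = (1 - x) * ∑ i ∈ range n, x ^ i := by
  linear_combination geom_sum_mul x n

lemma rho_mono {x y : ℝ} (hx : 0 < x) (hxy : x ≤ y) (hy : y < 1) {K K' : ℕ}
    (hK : 1 ≤ K) (hKK' : K < K') :
    x ^ (K' - K) * (1 - x ^ K) / (1 - x ^ K') ≤ y ^ (K' - K) * (1 - y ^ K) / (1 - y ^ K') := by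
  set m := K' - K with hm
  have hmK : m + K = K' := by omega
  have hy0 : 0 < y := lt_of_lt_of_le hx hxy
  have hx1 : x < 1 := lt_of_le_of_lt hxy hy
  have hSKx : 0 < ∑ i ∈ range K, x ^ i := geom_pos hx hK
  have hSKy : 0 < ∑ i ∈ range K, y ^ i := geom_pos hy0 hK
  have hSmx : 0 ≤ ∑ i ∈ range m, x ^ i := geom_nonneg hx.le m
  have hSmy : 0 ≤ ∑ i ∈ range m, y ^ i := geom_nonneg hy0.le m
  have hDx : 0 < (∑ i ∈ range m, x ^ i) + x ^ m * ∑ i ∈ range K, x ^ i :=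
    add_pos_of_nonneg_of_pos hSmx (mul_pos (pow_pos hx m) hSKx)
  have hDy : 0 < (∑ i ∈ range m, y ^ i) + y ^ m * ∑ i ∈ range K, y ^ i :=
    add_pos_of_nonneg_of_pos hSmy (mul_pos (pow_pos hy0 m) hSKy)
  have h1x : (1:ℝ) - x ≠ 0 := by linarith
  have h1y : (1:ℝ) - y ≠ 0 := by linarith
  have ex : x ^ m * (1 - x ^ K) / (1 - x ^ K')
      = x ^ m * (∑ i ∈ range K, x ^ i) / ((∑ i ∈ range m, x ^ i) + x ^ m * ∑ i ∈ range K, x ^ i) := by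
    rw [one_sub_pow x K, ← hmK, one_sub_pow x (m + K), geom_split]
    rw [show x ^ m * ((1 - x) * ∑ i ∈ range K, x ^ i)
        = (1 - x) * (x ^ m * ∑ i ∈ range K, x ^ i) by ring]
    rw [mul_div_mul_left _ _ h1x]
  have ey : y ^ m * (1 - y ^ K) / (1 - y ^ K')
      = y ^ m * (∑ i ∈ range K, y ^ i) / ((∑ i ∈ range m, y ^ i) + y ^ m * ∑ i ∈ range K, y ^ i) := by
    rw [one_sub_pow y K, ← hmK, one_sub_pow y (m + K), geom_split]
    rw [show y ^ m * ((1 - y) * ∑ i ∈ range K, y ^ i)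
        = (1 - y) * (y ^ m * ∑ i ∈ range K, y ^ i) by ring]
    rw [mul_div_mul_left _ _ h1y]
  rw [ex, ey, div_le_div_iff₀ hDx hDy]
  have hkey : x ^ m * ∑ i ∈ range m, y ^ i ≤ y ^ m * ∑ i ∈ range m, x ^ i := key_ineq hx.le hxy m
  have hS : (∑ i ∈ range K, x ^ i) ≤ ∑ i ∈ range K, y ^ i :=
    Finset.sum_le_sum fun i _ => pow_le_pow_left₀ hx.le hxy i
  nlinarith [mul_le_mul_of_nonneg_right hkey hSKx.le,
    mul_le_mul_of_nonneg_left hS (mul_nonneg (pow_nonneg hy0.le m) hSmx)]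
lemma haz_eq (G g : ℝ → ℝ) {K K' : ℕ} (hK : 1 ≤ K) (hKK' : K < K') {v : ℝ}
    (ha0 : 0 ≤ G v) (ha1 : G v < 1) :
    hazK G g K' v = hazK G g K v *
      ((K' : ℝ) / (K : ℝ) * (G v ^ (K' - K) * (1 - G v ^ K) / (1 - G v ^ K'))) := by
  unfold hazK
  have hK0 : (K : ℝ) ≠ 0 := Nat.cast_ne_zero.mpr (by omega)
  have h1 : G v ^ K < 1 := pow_lt_one₀ ha0 ha1 (by omega)
  have h2 : G v ^ K' < 1 := pow_lt_one₀ ha0 ha1 (by omega)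
  have hd1 : (1 : ℝ) - G v ^ K ≠ 0 := by linarith
  have hd2 : (1 : ℝ) - G v ^ K' ≠ 0 := by linarith
  have epow : G v ^ (K' - 1) = G v ^ (K - 1) * G v ^ (K' - K) := by
    rw [← pow_add]; congr 1; omega
  rw [epow]
  field_simp

/-- If the reduced value distribution `G_K` has an increasing hazard rate on `(0, v̄)`,
then so does `G_{K'}` for every `K' > K`; in particular, if the marginal value
distribution `G` itself has an IHR, then `G_K` has an IHR for every `K ≥ 1`. -/
theorem stmt4 (vbar : EReal) (G g g' : ℝ → ℝ) (hG : IsMarginal vbar G g g') :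
    (∀ K : ℕ, 1 ≤ K → MonotoneOn (hazK G g K) (Sopen vbar) →
      ∀ K' : ℕ, K < K' → MonotoneOn (hazK G g K') (Sopen vbar)) ∧
    (MonotoneOn (hazK G g 1) (Sopen vbar) →
      ∀ K : ℕ, 1 ≤ K → MonotoneOn (hazK G g K) (Sopen vbar)) := by
  have hSopen_sub : Sopen vbar ⊆ Sfull vbar := fun x hx => ⟨hx.1.le, hx.2⟩
  have hord : (Sfull vbar).OrdConnected :=
    ⟨fun x hx y hy z hz => ⟨le_trans hx.1 hz.1, lt_of_le_of_lt (EReal.coe_le_coe_iff.2 hz.2) hy.2⟩⟩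
  have hconv : Convex ℝ (Sfull vbar) := hord.convex
  have hint : interior (Sfull vbar) ⊆ Sopen vbar := by
    intro x hx
    have h1 : x ∈ Sfull vbar := interior_subset hx
    have h2 : x ∈ interior (Set.Ici (0 : ℝ)) :=
      interior_mono (fun z hz => hz.1) hx
    rw [interior_Ici] at h2
    exact ⟨h2, h1.2⟩
  have hmono : StrictMonoOn G (Sfull vbar) := by
    refine strictMonoOn_of_deriv_pos hconv hG.cont fun x hx => ?_
    have hx' := hint hx
    rw [(hG.hasDeriv x hx').deriv]
    exact hG.density_pos x hx'
  have hzero_mem : (0 : ℝ) ∈ Sfull vbar := ⟨le_refl 0, by simpa using hG.vbar_pos⟩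
  have hGpos : ∀ v ∈ Sopen vbar, 0 < G v := by
    intro v hv
    have := hmono hzero_mem (hSopen_sub hv) hv.1
    rwa [hG.zero] at this
  have hnb : (Filter.comap (fun v : ℝ => (v : EReal)) (nhdsWithin vbar (Set.Iio vbar))).NeBot := by
    rw [Filter.comap_neBot_iff]
    intro t ht
    rw [mem_nhdsLT_iff_exists_Ioo_subset' hG.vbar_pos] at ht
    obtain ⟨l, hl, hsub⟩ := ht
    obtain ⟨q, hq1, hq2⟩ := EReal.exists_rat_btwn_of_lt (Set.mem_Iio.1 hl)
    exact ⟨(q : ℝ), hsub ⟨hq1, hq2⟩⟩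
  have hle1 : ∀ w : ℝ, 0 < w → (w : EReal) < vbar → G w ≤ 1 := by
    intro w hw0 hwv
    refine ge_of_tendsto hG.tendsto_one ?_
    have hm : (fun v : ℝ => (v : EReal)) ⁻¹' Set.Ioo (w : EReal) vbar ∈
        Filter.comap (fun v : ℝ => (v : EReal)) (nhdsWithin vbar (Set.Iio vbar)) :=
      Filter.preimage_mem_comap (Ioo_mem_nhdsLT_of_mem ⟨hwv, le_refl vbar⟩)
    filter_upwards [hm] with u hu
    have hwu : w < u := EReal.coe_lt_coe_iff.1 hu.1
    exact (hmono ⟨hw0.le, hwv⟩ ⟨(hw0.trans hwu).le, hu.2⟩ hwu).le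
  have hlt1 : ∀ v ∈ Sopen vbar, G v < 1 := by
    intro v hv
    obtain ⟨q, hq1, hq2⟩ := EReal.exists_rat_btwn_of_lt hv.2
    have hvq : v < (q : ℝ) := EReal.coe_lt_coe_iff.1 hq1
    have hq0 : (0 : ℝ) < (q : ℝ) := hv.1.trans hvq
    exact lt_of_lt_of_le (hmono (hSopen_sub hv) ⟨hq0.le, hq2⟩ hvq) (hle1 q hq0 hq2)
  have part1 : ∀ K : ℕ, 1 ≤ K → MonotoneOn (hazK G g K) (Sopen vbar) →
      ∀ K' : ℕ, K < K' → MonotoneOn (hazK G g K') (Sopen vbar) := by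
    intro K hK hmonoK K' hKK' v hv w hw hvw
    have hGv0 := hGpos v hv
    have hGw0 := hGpos w hw
    have hGv1 := hlt1 v hv
    have hGw1 := hlt1 w hw
    have hGvw : G v ≤ G w := hmono.monotoneOn (hSopen_sub hv) (hSopen_sub hw) hvw
    rw [haz_eq G g hK hKK' hGv0.le hGv1, haz_eq G g hK hKK' hGw0.le hGw1]
    have hrho := rho_mono hGv0 hGvw hGw1 hK hKK'
    have hc : (0 : ℝ) ≤ (K' : ℝ) / (K : ℝ) := by positivity
    refine mul_le_mul (hmonoK hv hw hvw) (mul_le_mul_of_nonneg_left hrho hc) ?_ ?_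
    · refine mul_nonneg hc (div_nonneg (mul_nonneg (pow_nonneg hGv0.le _) ?_) ?_)
      · linarith [pow_le_one₀ (n := K) hGv0.le hGv1.le]
      · linarith [pow_lt_one₀ hGv0.le hGv1 (show K' ≠ 0 by omega)]
    · unfold hazK
      refine div_nonneg ?_ ?_
      · have := (hG.density_pos w hw).le
        positivity
      · linarith [pow_le_one₀ (n := K) hGw0.le hGw1.le]
  exact ⟨part1, fun h1 K hK => by
    rcases eq_or_lt_of_le hK with h | h
    · exact h ▸ h1
    · exact part1 1 le_rfl h1 K h⟩
end

section
/- Suppose the marginal value distribution G has bounded support, i.e., v̄ < +∞, and let m̄ ∈ (0,1). Then for every ε ∈ (0,v̄) and δ ∈ (0,1) there exists K₀ such that for all integers K > K₀: (i) the residual surplus of the no-screening mechanism satisfies m̄ ∫₀^{v̄} v g_K(v) dv > m̄(1−δ)(v̄−ε), and (ii) the residual surplus of the full-screening mechanism satisfies ∫_{q_K}^{v̄} (v − q_K) g_K(v) dv < m̄ε, where q_K ∈ (0,v̄) is defined by 1 − G_K(q_K) = m̄. -/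
open MeasureTheory

/-- The density `g_K(v) = K g(v) G(v)^{K−1}` of the reduced value distribution `G_K`. -/
noncomputable def gK (G g : ℝ → ℝ) (K : ℕ) (v : ℝ) : ℝ := (K : ℝ) * g v * G v ^ (K - 1)


/-- Bounded support: with `v̄ < ∞`, for large `K` the residual surplus of no screening
exceeds `m̄(1−δ)(v̄−ε)` while that of full screening is below `m̄ε`. -/
theorem stmt6 (vbar : ℝ) (G g g' : ℝ → ℝ) (hG : IsMarginal (vbar : EReal) G g g')
    (mbar : ℝ) (hm : mbar ∈ Set.Ioo (0 : ℝ) 1)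
    (ε : ℝ) (hε : ε ∈ Set.Ioo 0 vbar) (δ : ℝ) (hδ : δ ∈ Set.Ioo (0 : ℝ) 1) :
    ∃ K₀ : ℕ, ∀ K : ℕ, K₀ < K →
      (mbar * (1 - δ) * (vbar - ε) < mbar * ∫ v in Set.Ico 0 vbar, v * gK G g K v) ∧
      ∀ q ∈ Set.Ioo (0 : ℝ) vbar, 1 - G q ^ K = mbar →
        (∫ v in Set.Ico q vbar, (v - q) * gK G g K v) < mbar * ε := by
  obtain ⟨hm0, hm1⟩ := hm
  obtain ⟨hε0, hεv⟩ := hε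
  obtain ⟨hδ0, hδ1⟩ := hδ
  have hv0 : (0:ℝ) < vbar := lt_trans hε0 hεv
  have hSopen : Sopen (vbar : EReal) = Set.Ioo 0 vbar := by
    ext v; simp [Sopen, Set.mem_Ioo, EReal.coe_lt_coe_iff]
  have hSfull : Sfull (vbar : EReal) = Set.Ico 0 vbar := by
    ext v; simp [Sfull, Set.mem_Ico, EReal.coe_lt_coe_iff]
  -- G is strictly monotone on [0, v̄)
  have hGmono : StrictMonoOn G (Set.Ico 0 vbar) := by
    apply strictMonoOn_of_deriv_pos (convex_Ico 0 vbar)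
    · rw [← hSfull]; exact hG.cont
    · intro x hx
      rw [interior_Ico] at hx
      rw [(hG.hasDeriv x (by rwa [hSopen])).deriv]
      exact hG.density_pos x (by rwa [hSopen])
  have hGnn : ∀ v ∈ Set.Ico 0 vbar, 0 ≤ G v := by
    intro v hv
    rcases eq_or_lt_of_le hv.1 with h | h
    · rw [← h, hG.zero]
    · rw [← hG.zero]
      exact (hGmono ⟨le_refl 0, hv0⟩ hv h).le
  -- the limit of G at v̄ from the left, as a real filter statement
  have hGlim : Filter.Tendsto G (nhdsWithin vbar (Set.Iio vbar)) (nhds 1) := by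
    have hcomap : Filter.comap (fun v : ℝ => (v : EReal))
        (nhdsWithin (vbar : EReal) (Set.Iio (vbar : EReal)))
        = nhdsWithin vbar (Set.Iio vbar) := by
      rw [nhdsWithin, nhdsWithin, Filter.comap_inf, Filter.comap_principal,
        ← EReal.isEmbedding_coe.toIsInducing.nhds_eq_comap]
      congr 1
      ext v
      simp [EReal.coe_lt_coe_iff]
    have h := hG.tendsto_one
    rwa [hcomap] at h
  have hGlt1 : ∀ v ∈ Set.Ico 0 vbar, G v < 1 := by
    intro v hv
    set u := (v + vbar) / 2 with hu
    have hvu : v < u := by rw [hu]; linarith [hv.2]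
    have huv : u < vbar := by rw [hu]; linarith [hv.2]
    have hu0 : 0 ≤ u := le_trans hv.1 hvu.le
    have h1 : G u ≤ 1 := by
      apply ge_of_tendsto hGlim
      filter_upwards [Ioo_mem_nhdsLT_of_mem (Set.mem_Ioc.mpr ⟨huv, le_refl vbar⟩)] with x hx
      exact (hGmono ⟨hu0, huv⟩ ⟨le_trans hu0 hx.1.le, hx.2⟩ hx.1).le
    exact lt_of_lt_of_le (hGmono hv ⟨hu0, huv⟩ hvu) h1
  -- G^K has derivative gK on (0, v̄)
  have hderivK : ∀ K : ℕ, ∀ v ∈ Set.Ioo 0 vbar,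
      HasDerivAt (fun x => G x ^ K) (gK G g K v) v := by
    intro K v hv
    have h := (hG.hasDeriv v (by rwa [hSopen])).fun_pow K
    refine h.congr_deriv ?_
    simp only [gK]; ring
  have hgcont : ContinuousOn g (Set.Ioo 0 vbar) := fun v hv =>
    ((hG.hasDeriv2 v (by rwa [hSopen])).continuousAt).continuousWithinAt
  have hGcont : ContinuousOn G (Set.Ioo 0 vbar) := fun v hv =>
    ((hG.hasDeriv v (by rwa [hSopen])).continuousAt).continuousWithinAt
  have hgKcont : ∀ K : ℕ, ContinuousOn (gK G g K) (Set.Ioo 0 vbar) := fun K =>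
    (continuousOn_const.mul hgcont).mul (hGcont.pow _)
  have hgKnn : ∀ K : ℕ, ∀ v ∈ Set.Ioo 0 vbar, 0 ≤ gK G g K v := by
    intro K v hv
    have h1 := (hG.density_pos v (by rwa [hSopen])).le
    have h2 := hGnn v (Set.Ioo_subset_Ico_self hv)
    exact mul_nonneg (mul_nonneg (Nat.cast_nonneg K) h1) (pow_nonneg h2 _)
  -- FTC on compact subintervals
  have hFTC : ∀ K : ℕ, ∀ a b : ℝ, a ∈ Set.Ioo 0 vbar → b ∈ Set.Ioo 0 vbar → a ≤ b →
      ∫ x in Set.Ioc a b, gK G g K x = G b ^ K - G a ^ K := by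
    intro K a b ha hb hab
    have hsub : Set.uIcc a b ⊆ Set.Ioo 0 vbar := by
      rw [Set.uIcc_of_le hab]
      exact fun x hx => ⟨lt_of_lt_of_le ha.1 hx.1, lt_of_le_of_lt hx.2 hb.2⟩
    rw [← intervalIntegral.integral_of_le hab]
    apply intervalIntegral.integral_eq_sub_of_hasDerivAt
    · intro x hx
      exact hderivK K x (hsub hx)
    · exact ((hgKcont K).mono hsub).intervalIntegrable
  -- integrability of gK on (0, v̄]
  have hInt : ∀ K : ℕ, IntegrableOn (gK G g K) (Set.Ioc 0 vbar) := by
    intro K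
    set c := vbar / 2 with hc
    have hc0 : 0 < c := by positivity
    set aseq : ℕ → ℝ := fun n => c * (1 / (n + 1)) with haseq
    set bseq : ℕ → ℝ := fun n => vbar - c * (1 / (n + 1)) with hbseq
    have hfrac : ∀ n : ℕ, 0 < (1:ℝ) / (n + 1) ∧ (1:ℝ) / (n + 1) ≤ 1 := by
      intro n
      constructor
      · positivity
      · rw [div_le_one (by positivity)]
        simp [Nat.cast_nonneg]
    have hmem : ∀ n : ℕ, aseq n ∈ Set.Ioo 0 vbar ∧ bseq n ∈ Set.Ioo 0 vbar
        ∧ aseq n ≤ bseq n := by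
      intro n
      obtain ⟨hp, hle⟩ := hfrac n
      have h1 : 0 < aseq n := by rw [haseq]; positivity
      have h2 : aseq n ≤ c := by
        rw [haseq]
        nlinarith
      refine ⟨⟨h1, ?_⟩, ⟨?_, ?_⟩, ?_⟩
      · have : c < vbar := by rw [hc]; linarith
        linarith
      · rw [hbseq]; simp only
        nlinarith
      · rw [hbseq]; simp only
        nlinarith
      · rw [hbseq]; simp only
        nlinarith
    have hta : Filter.Tendsto aseq Filter.atTop (nhds 0) := by
      have h := tendsto_one_div_add_atTop_nhds_zero_nat.const_mul c
      rw [haseq]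
      simpa [one_div] using h
    have htb : Filter.Tendsto bseq Filter.atTop (nhds vbar) := by
      have h := (tendsto_one_div_add_atTop_nhds_zero_nat.const_mul c).const_sub vbar
      rw [hbseq]
      simpa [one_div] using h
    refine MeasureTheory.integrableOn_Ioc_of_intervalIntegral_norm_bounded
      (I := 1) (fun n => ?_) hta htb (Filter.Eventually.of_forall fun n => ?_)
    · have hsub : Set.Icc (aseq n) (bseq n) ⊆ Set.Ioo 0 vbar := fun x hx =>
        ⟨lt_of_lt_of_le (hmem n).1.1 hx.1, lt_of_le_of_lt hx.2 (hmem n).2.1.2⟩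
      exact (((hgKcont K).mono hsub).integrableOn_Icc).mono_set Set.Ioc_subset_Icc_self
    · have hsub : Set.Ioc (aseq n) (bseq n) ⊆ Set.Ioo 0 vbar := fun x hx =>
        ⟨lt_trans (hmem n).1.1 hx.1, lt_of_le_of_lt hx.2 (hmem n).2.1.2⟩
      have hcongr : ∫ x in Set.Ioc (aseq n) (bseq n), ‖gK G g K x‖
          = ∫ x in Set.Ioc (aseq n) (bseq n), gK G g K x := by
        apply MeasureTheory.setIntegral_congr_fun measurableSet_Ioc
        intro x hx
        exact Real.norm_of_nonneg (hgKnn K x (hsub hx))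
      rw [hcongr, hFTC K _ _ (hmem n).1 (hmem n).2.1 (hmem n).2.2]
      have h1 : G (bseq n) ^ K ≤ 1 :=
        pow_le_one₀ (hGnn _ (Set.Ioo_subset_Ico_self (hmem n).2.1))
          (hGlt1 _ (Set.Ioo_subset_Ico_self (hmem n).2.1)).le
      have h2 : 0 ≤ G (aseq n) ^ K :=
        pow_nonneg (hGnn _ (Set.Ioo_subset_Ico_self (hmem n).1)) K
      linarith
  -- the value of the improper integral of gK on (a, v̄)
  have hVal : ∀ K : ℕ, ∀ a ∈ Set.Ioo 0 vbar,
      ∫ x in Set.Ioo a vbar, gK G g K x = 1 - G a ^ K := by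
    intro K a ha
    rw [← MeasureTheory.integral_Ioc_eq_integral_Ioo]
    set bseq : ℕ → ℝ := fun n => vbar - (vbar - a) * (1 / (n + 1)) with hbseq
    have hfrac : ∀ n : ℕ, 0 < (1:ℝ) / (n + 1) ∧ (1:ℝ) / (n + 1) ≤ 1 := by
      intro n
      constructor
      · positivity
      · rw [div_le_one (by positivity)]
        simp [Nat.cast_nonneg]
    have hbmem : ∀ n : ℕ, bseq n ∈ Set.Ioo 0 vbar ∧ a ≤ bseq n := by
      intro n
      obtain ⟨hp, hle⟩ := hfrac n
      have hav : a < vbar := ha.2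
      have ha0 : 0 < a := ha.1
      refine ⟨⟨?_, ?_⟩, ?_⟩ <;> (rw [hbseq]; simp only) <;> nlinarith
    have htb : Filter.Tendsto bseq Filter.atTop (nhds vbar) := by
      have h := (tendsto_one_div_add_atTop_nhds_zero_nat.const_mul (vbar - a)).const_sub vbar
      rw [hbseq]
      simpa [one_div] using h
    have hcov := MeasureTheory.aecover_Ioc_of_Ioc (μ := volume) (l := Filter.atTop)
      (a := fun _ : ℕ => a) (b := bseq) (A := a) (B := vbar) tendsto_const_nhds htb
    apply hcov.integral_eq_of_tendsto
    · exact (hInt K).mono_set (Set.Ioc_subset_Ioc_left ha.1.le)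
    · have heq : ∀ n : ℕ, ∫ x in Set.Ioc a (bseq n), gK G g K x
          ∂(volume.restrict (Set.Ioc a vbar)) = G (bseq n) ^ K - G a ^ K := by
        intro n
        rw [Measure.restrict_restrict measurableSet_Ioc,
          Set.inter_eq_self_of_subset_left (Set.Ioc_subset_Ioc_right (hbmem n).1.2.le)]
        exact hFTC K a (bseq n) ha (hbmem n).1 (hbmem n).2
      have h1 : Filter.Tendsto bseq Filter.atTop (nhdsWithin vbar (Set.Iio vbar)) :=
        tendsto_nhdsWithin_of_tendsto_nhds_of_eventually_within _ htb
          (Filter.Eventually.of_forall fun n => (hbmem n).1.2)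
      have htG : Filter.Tendsto (fun n => G (bseq n) ^ K - G a ^ K) Filter.atTop
          (nhds (1 - G a ^ K)) := by
        have h2 := ((hGlim.comp h1).pow K).sub_const (G a ^ K)
        simpa using h2
      exact Filter.Tendsto.congr (fun n => (heq n).symm) htG
  -- integrability of v ↦ v * gK v and comparisons
  have hIntOo : ∀ K : ℕ, IntegrableOn (gK G g K) (Set.Ioo 0 vbar) := fun K =>
    (hInt K).mono_set Set.Ioo_subset_Ioc_self
  have hIntv : ∀ K : ℕ, IntegrableOn (fun v => v * gK G g K v) (Set.Ioo 0 vbar) := by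
    intro K
    apply MeasureTheory.Integrable.mono' ((hIntOo K).const_mul vbar)
    · exact (continuousOn_id.mul (hgKcont K)).aestronglyMeasurable measurableSet_Ioo
    · rw [MeasureTheory.ae_restrict_iff' measurableSet_Ioo]
      filter_upwards with v hv
      rw [Real.norm_eq_abs, abs_of_nonneg (mul_nonneg hv.1.le (hgKnn K v hv))]
      exact mul_le_mul_of_nonneg_right hv.2.le (hgKnn K v hv)
  -- choose the cutoff w and the threshold
  obtain ⟨w, hwdef⟩ : ∃ w : ℝ, w = vbar - ε / 2 := ⟨_, rfl⟩
  have hw : w ∈ Set.Ioo 0 vbar := ⟨by rw [hwdef]; linarith, by rw [hwdef]; linarith⟩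
  have hwIco : w ∈ Set.Ico 0 vbar := ⟨hw.1.le, hw.2⟩
  obtain ⟨t, htdef⟩ : ∃ t : ℝ, t = (1 - δ) * (vbar - ε) := ⟨_, rfl⟩
  have ht0 : 0 < t := by rw [htdef]; apply mul_pos <;> linarith
  have htw : t < w := by rw [htdef, hwdef]; nlinarith
  obtain ⟨η, hηdef⟩ : ∃ η : ℝ, η = 1 - t / w := ⟨_, rfl⟩
  have hη : 0 < η := by
    rw [hηdef, sub_pos, div_lt_one hw.1]
    exact htw
  have hGw0 : 0 ≤ G w := hGnn w hwIco
  have hGw1 : G w < 1 := hGlt1 w hwIco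
  have htend : Filter.Tendsto (fun K : ℕ => G w ^ K) Filter.atTop (nhds 0) :=
    tendsto_pow_atTop_nhds_zero_of_lt_one hGw0 hGw1
  have hev : ∀ᶠ K : ℕ in Filter.atTop, G w ^ K < min η (1 - mbar) :=
    htend.eventually_lt_const (lt_min hη (by linarith))
  obtain ⟨K₀, hK₀⟩ := Filter.eventually_atTop.mp hev
  refine ⟨K₀, fun K hK => ?_⟩
  have hKsmall := hK₀ K hK.le
  have hKη : G w ^ K < η := lt_of_lt_of_le hKsmall (min_le_left _ _)
  have hKm : G w ^ K < 1 - mbar := lt_of_lt_of_le hKsmall (min_le_right _ _)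
  constructor
  · -- part (i)
    have h3 : ∫ v in Set.Ioo w vbar, w * gK G g K v = w * (1 - G w ^ K) := by
      rw [MeasureTheory.integral_const_mul, hVal K w hw]
    have h1 : ∫ v in Set.Ioo w vbar, w * gK G g K v
        ≤ ∫ v in Set.Ioo w vbar, v * gK G g K v := by
      apply MeasureTheory.setIntegral_mono_on
      · exact (((hInt K).mono_set (fun x hx =>
          ⟨lt_trans hw.1 hx.1, hx.2.le⟩ : Set.Ioo w vbar ⊆ Set.Ioc 0 vbar)).const_mul w)
      · exact (hIntv K).mono_set (Set.Ioo_subset_Ioo_left hw.1.le)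
      · exact measurableSet_Ioo
      · intro v hv
        exact mul_le_mul_of_nonneg_right hv.1.le (hgKnn K v ⟨lt_trans hw.1 hv.1, hv.2⟩)
    have h2 : ∫ v in Set.Ioo w vbar, v * gK G g K v
        ≤ ∫ v in Set.Ioo 0 vbar, v * gK G g K v := by
      apply MeasureTheory.setIntegral_mono_set (hIntv K)
      · rw [Filter.EventuallyLE, MeasureTheory.ae_restrict_iff' measurableSet_Ioo]
        filter_upwards with v hv
        exact mul_nonneg hv.1.le (hgKnn K v hv)
      · exact (Set.Ioo_subset_Ioo_left hw.1.le).eventuallyLE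
    have h4 : t < w * (1 - G w ^ K) := by
      have h5 : t / w * w = t := div_mul_cancel₀ t hw.1.ne'
      have hlt : t / w < 1 - G w ^ K := by rw [hηdef] at hKη; linarith
      calc t = t / w * w := h5.symm
        _ < (1 - G w ^ K) * w := mul_lt_mul_of_pos_right hlt hw.1
        _ = w * (1 - G w ^ K) := mul_comm _ _
    rw [mul_assoc, ← htdef, MeasureTheory.integral_Ico_eq_integral_Ioo]

    have : t < ∫ v in Set.Ioo 0 vbar, v * gK G g K v := by
      calc t < w * (1 - G w ^ K) := h4
        _ = ∫ v in Set.Ioo w vbar, w * gK G g K v := h3.symm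
        _ ≤ ∫ v in Set.Ioo w vbar, v * gK G g K v := h1
        _ ≤ ∫ v in Set.Ioo 0 vbar, v * gK G g K v := h2
    exact mul_lt_mul_of_pos_left this hm0
  · -- part (ii)
    intro q hq hqeq
    have hqIco : q ∈ Set.Ico 0 vbar := ⟨hq.1.le, hq.2⟩
    have hGqK : G q ^ K = 1 - mbar := by linarith
    have hwq : w < q := by
      have hpow : G w ^ K < G q ^ K := by rw [hGqK]; exact hKm
      have hGlt : G w < G q := lt_of_pow_lt_pow_left₀ K (hGnn q hqIco) hpow
      exact (hGmono.lt_iff_lt hwIco hqIco).mp hGlt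
    have hsubq : Set.Ioo q vbar ⊆ Set.Ioo 0 vbar := Set.Ioo_subset_Ioo_left hq.1.le
    have hIq : IntegrableOn (fun v => (v - q) * gK G g K v) (Set.Ioo q vbar) := by
      apply MeasureTheory.Integrable.mono'
        (((hIntOo K).mono_set hsubq).const_mul (vbar - q))
      · exact ((continuousOn_id.sub continuousOn_const).mul
          ((hgKcont K).mono hsubq)).aestronglyMeasurable measurableSet_Ioo
      · rw [MeasureTheory.ae_restrict_iff' measurableSet_Ioo]
        filter_upwards with v hv
        have hnn := hgKnn K v (hsubq hv)
        rw [Real.norm_eq_abs, abs_of_nonneg (mul_nonneg (by linarith [hv.1]) hnn)]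
        exact mul_le_mul_of_nonneg_right (by linarith [hv.2]) hnn
    have h1 : ∫ v in Set.Ioo q vbar, (v - q) * gK G g K v
        ≤ ∫ v in Set.Ioo q vbar, (vbar - q) * gK G g K v := by
      apply MeasureTheory.setIntegral_mono_on hIq
        (((hIntOo K).mono_set hsubq).const_mul (vbar - q)) measurableSet_Ioo
      intro v hv
      exact mul_le_mul_of_nonneg_right (by linarith [hv.2]) (hgKnn K v (hsubq hv))
    have h2 : ∫ v in Set.Ioo q vbar, (vbar - q) * gK G g K v = (vbar - q) * mbar := by
      rw [MeasureTheory.integral_const_mul, hVal K q hq, hGqK]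
      ring
    have h3 : (vbar - q) * mbar < mbar * ε := by
      have : vbar - q < ε := by rw [hwdef] at hwq; linarith
      nlinarith
    rw [MeasureTheory.integral_Ico_eq_integral_Ioo]
    calc ∫ v in Set.Ioo q vbar, (v - q) * gK G g K v
        ≤ ∫ v in Set.Ioo q vbar, (vbar - q) * gK G g K v := h1
      _ = (vbar - q) * mbar := h2
      _ < mbar * ε := h3
end

section
/- Let α > 0 and let Φ_α(w) = exp(−w^{−α}) for w > 0 be the Fréchet distribution function with shape parameter α, with density φ_α(w) = α w^{−α−1} exp(−w^{−α}). Then Φ_α has an increasing and decreasing hazard rate (IDHR): there exists w* > 0 such that the hazard rate w ↦ φ_α(w)/(1−Φ_α(w)) is strictly increasing on (0,w*) and strictly decreasing on (w*,∞); moreover w* satisfies (w*)^{−α} / (1 − exp(−(w*)^{−α})) = (α+1)/α. -/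
/-- The Fréchet distribution function with shape parameter `α` (for `w > 0`). -/
noncomputable def frechetCDF (α w : ℝ) : ℝ := Real.exp (-(w ^ (-α)))

/-- The Fréchet density with shape parameter `α` (for `w > 0`). -/
noncomputable def frechetPDF (α w : ℝ) : ℝ := α * w ^ (-α - 1) * Real.exp (-(w ^ (-α)))

noncomputable def Lfun (β t : ℝ) : ℝ := β * Real.log t - Real.log (Real.exp t - 1)

lemma phi_props (β : ℝ) (hβ : 1 < β) :
    ∃ tstar : ℝ, Real.log β < tstar ∧ β * (1 - Real.exp (-tstar)) - tstar = 0 ∧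
      (∀ t ∈ Set.Ioo (0:ℝ) tstar, 0 < β * (1 - Real.exp (-t)) - t) ∧
      (∀ t ∈ Set.Ioi tstar, β * (1 - Real.exp (-t)) - t < 0) := by
  set φ : ℝ → ℝ := fun t => β * (1 - Real.exp (-t)) - t with hφ
  have hβ0 : (0:ℝ) < β := by linarith
  have hlogβ : 0 < Real.log β := Real.log_pos hβ
  have hderiv : ∀ t : ℝ, HasDerivAt φ (β * Real.exp (-t) - 1) t := by
    intro t
    have h1 : HasDerivAt (fun t : ℝ => Real.exp (-t)) (Real.exp (-t) * (-1)) t :=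
      ((hasDerivAt_id t).neg).exp
    have h2 : HasDerivAt (fun t : ℝ => β * (1 - Real.exp (-t)))
        (β * (0 - Real.exp (-t) * (-1))) t :=
      ((hasDerivAt_const t (1:ℝ)).sub h1).const_mul β
    have := h2.sub (hasDerivAt_id t)
    have e : β * Real.exp (-t) - 1 = β * (0 - Real.exp (-t) * (-1)) - 1 := by ring
    rw [e]; exact this
  have hcont : Continuous φ := by continuity
  have hmono : StrictMonoOn φ (Set.Icc 0 (Real.log β)) := by
    apply strictMonoOn_of_deriv_pos (convex_Icc _ _) hcont.continuousOn
    intro t ht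
    rw [interior_Icc] at ht
    rw [(hderiv t).deriv]
    have : Real.exp t < β := by
      rw [← Real.exp_log hβ0]
      exact Real.exp_lt_exp.2 ht.2
    have h3 : 1 < β * Real.exp (-t) := by
      rw [Real.exp_neg]
      have h4 := Real.exp_pos t
      have h5 : Real.exp t * (Real.exp t)⁻¹ = 1 := mul_inv_cancel₀ h4.ne'
      nlinarith [mul_pos (sub_pos.2 this) (inv_pos.2 h4)]
    linarith
  have hanti : StrictAntiOn φ (Set.Ici (Real.log β)) := by
    apply strictAntiOn_of_deriv_neg (convex_Ici _) hcont.continuousOn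
    intro t ht
    rw [interior_Ici] at ht
    rw [(hderiv t).deriv]
    have : β < Real.exp t := by
      rw [← Real.exp_log hβ0]
      exact Real.exp_lt_exp.2 ht
    have h3 : β * Real.exp (-t) < 1 := by
      rw [Real.exp_neg]
      have h4 := Real.exp_pos t
      have h5 : Real.exp t * (Real.exp t)⁻¹ = 1 := mul_inv_cancel₀ h4.ne'
      nlinarith [mul_pos (sub_pos.2 this) (inv_pos.2 h4)]
    linarith
  have hφ0 : φ 0 = 0 := by simp [hφ]
  have hφlog : 0 < φ (Real.log β) := by
    have h1 : Real.log β < β - 1 := by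
      have := Real.log_lt_sub_one_of_pos hβ0 (by linarith)
      linarith
    have : Real.exp (-Real.log β) = β⁻¹ := by
      rw [Real.exp_neg, Real.exp_log hβ0]
    simp only [hφ, this]
    have : β * (1 - β⁻¹) = β - 1 := by field_simp
    rw [this]; linarith
  have hφT : φ (β + 1) < 0 := by
    simp only [hφ]
    have := Real.exp_pos (-(β+1))
    nlinarith
  obtain ⟨tstar, htmem, htval⟩ : ∃ t ∈ Set.Ioo (Real.log β) (β + 1), φ t = 0 := by
    have h0 : (0:ℝ) ∈ Set.Ioo (φ (β+1)) (φ (Real.log β)) := ⟨hφT, hφlog⟩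
    have := intermediate_value_Ioo' (le_of_lt (by
        have := Real.log_lt_sub_one_of_pos hβ0 (by linarith)
        linarith : Real.log β < β + 1))
      hcont.continuousOn h0
    obtain ⟨t, ht, hval⟩ := this
    exact ⟨t, ht, hval⟩
  refine ⟨tstar, htmem.1, htval, ?_, ?_⟩
  · intro t ht
    rcases le_or_gt t (Real.log β) with h | h
    · have := hmono (Set.mem_Icc.2 ⟨le_refl 0, hlogβ.le⟩) (Set.mem_Icc.2 ⟨ht.1.le, h⟩) ht.1
      rw [hφ0] at this; exact this
    · have := hanti (Set.mem_Ici.2 h.le) (Set.mem_Ici.2 htmem.1.le) ht.2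
      rw [htval] at this; exact this
  · intro t ht
    have := hanti (Set.mem_Ici.2 htmem.1.le) (Set.mem_Ici.2 (htmem.1.le.trans (le_of_lt ht))) ht
    rw [htval] at this; exact this

lemma Lfun_hasDeriv (β t : ℝ) (ht : 0 < t) :
    HasDerivAt (Lfun β) (β * t⁻¹ - Real.exp t / (Real.exp t - 1)) t := by
  have hE1 : (1:ℝ) < Real.exp t := by
    rw [← Real.exp_zero]; exact Real.exp_lt_exp.2 ht
  have h1 : HasDerivAt (fun t : ℝ => β * Real.log t) (β * t⁻¹) t :=
    (Real.hasDerivAt_log ht.ne').const_mul β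
  have h2 : HasDerivAt (fun t : ℝ => Real.log (Real.exp t - 1))
      (Real.exp t / (Real.exp t - 1)) t := by
    have := ((Real.hasDerivAt_exp t).sub_const 1).log (by linarith)
    exact this
  exact h1.sub h2

lemma Lfun_sign (β tstar : ℝ) (hβ : 1 < β) (hts : 0 < tstar)
    (hpos : ∀ t ∈ Set.Ioo (0:ℝ) tstar, 0 < β * (1 - Real.exp (-t)) - t)
    (hneg : ∀ t ∈ Set.Ioi tstar, β * (1 - Real.exp (-t)) - t < 0) :
    StrictMonoOn (Lfun β) (Set.Ioo 0 tstar) ∧ StrictAntiOn (Lfun β) (Set.Ioi tstar) := by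
  have key : ∀ t : ℝ, 0 < t →
      ((0 < β * (1 - Real.exp (-t)) - t → 0 < β * t⁻¹ - Real.exp t / (Real.exp t - 1)) ∧
       (β * (1 - Real.exp (-t)) - t < 0 → β * t⁻¹ - Real.exp t / (Real.exp t - 1) < 0)) := by
    intro t ht
    have hE1 : (1:ℝ) < Real.exp t := by
      rw [← Real.exp_zero]; exact Real.exp_lt_exp.2 ht
    have hEne : Real.exp t - 1 > 0 := by linarith
    have hmul : Real.exp (-t) * Real.exp t = 1 := by
      rw [← Real.exp_add]; simp
    have hfact : β * t⁻¹ - Real.exp t / (Real.exp t - 1)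
        = (Real.exp t * (β * (1 - Real.exp (-t)) - t)) / (t * (Real.exp t - 1)) := by
      field_simp
      nlinarith [hmul]
    constructor
    · intro h
      rw [hfact]
      positivity
    · intro h
      rw [hfact]
      apply div_neg_of_neg_of_pos
      · nlinarith [Real.exp_pos t]
      · positivity
  constructor
  · apply strictMonoOn_of_deriv_pos (convex_Ioo _ _)
    · intro t htm
      exact ((Lfun_hasDeriv β t htm.1).continuousAt).continuousWithinAt
    · intro t htm
      rw [interior_Ioo] at htm
      rw [(Lfun_hasDeriv β t htm.1).deriv]
      exact (key t htm.1).1 (hpos t htm)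
  · apply strictAntiOn_of_deriv_neg (convex_Ioi _)
    · intro t htm
      exact ((Lfun_hasDeriv β t (hts.trans htm)).continuousAt).continuousWithinAt
    · intro t htm
      rw [interior_Ioi] at htm
      rw [(Lfun_hasDeriv β t (hts.trans htm)).deriv]
      exact (key t (hts.trans htm)).2 (hneg t htm)

lemma hazard_eq (α w : ℝ) (hα : 0 < α) (hw : 0 < w) :
    frechetPDF α w / (1 - frechetCDF α w) = α * Real.exp (Lfun ((α+1)/α) (w ^ (-α))) := by
  set β := (α+1)/α with hβdef
  set t := w ^ (-α) with htdef
  have ht : 0 < t := Real.rpow_pos_of_pos hw _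
  have hE1 : (1:ℝ) < Real.exp t := by
    rw [← Real.exp_zero]; exact Real.exp_lt_exp.2 ht
  have hmul : Real.exp (-t) * Real.exp t = 1 := by rw [← Real.exp_add]; simp
  have hexpL : Real.exp (Lfun β t) = t ^ β / (Real.exp t - 1) := by
    rw [Lfun, Real.exp_sub, Real.exp_log (by linarith), Real.rpow_def_of_pos ht, mul_comm]
  have hpow : w ^ (-α - 1) = t ^ β := by
    have hβmul : (-α) * β = -α - 1 := by
      rw [hβdef]; field_simp; ring
    rw [htdef, ← Real.rpow_mul hw.le, hβmul]
  rw [frechetPDF, frechetCDF, hexpL, hpow, ← htdef]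
  have h1 : (0:ℝ) < 1 - Real.exp (-t) := by
    nlinarith [Real.exp_pos (-t)]
  rw [← mul_div_assoc, div_eq_div_iff (by linarith) (by linarith)]
  linear_combination α * t ^ β * hmul

/-- The Fréchet distribution has an increasing and then decreasing hazard rate (IDHR),
with the threshold `w*` characterized by `(w*)^{-α} / (1 − exp(−(w*)^{-α})) = (α+1)/α`. -/
theorem stmt8 (α : ℝ) (hα : 0 < α) :
    ∃ wstar : ℝ, 0 < wstar ∧
      StrictMonoOn (fun w : ℝ => frechetPDF α w / (1 - frechetCDF α w)) (Set.Ioo 0 wstar) ∧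
      StrictAntiOn (fun w : ℝ => frechetPDF α w / (1 - frechetCDF α w)) (Set.Ioi wstar) ∧
      wstar ^ (-α) / (1 - Real.exp (-(wstar ^ (-α)))) = (α + 1) / α := by
  have hβ : 1 < (α + 1) / α := by rw [lt_div_iff₀ hα]; linarith
  obtain ⟨tstar, htlog, htval, hpos, hneg⟩ := phi_props _ hβ
  have hts : 0 < tstar := (Real.log_pos hβ).trans htlog
  obtain ⟨hLmono, hLanti⟩ := Lfun_sign _ _ hβ hts hpos hneg
  set wstar := tstar ^ (-α⁻¹) with hwdef
  have hw0 : 0 < wstar := Real.rpow_pos_of_pos hts _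
  have hwt : wstar ^ (-α) = tstar := by
    have h1 : (-α⁻¹) * (-α) = 1 := by field_simp
    rw [hwdef, ← Real.rpow_mul hts.le, h1, Real.rpow_one]
  refine ⟨wstar, hw0, ?_, ?_, ?_⟩
  · intro w₁ h₁ w₂ h₂ hlt
    show frechetPDF α w₁ / (1 - frechetCDF α w₁) < frechetPDF α w₂ / (1 - frechetCDF α w₂)
    rw [hazard_eq α w₁ hα h₁.1, hazard_eq α w₂ hα h₂.1]
    have ht1 : tstar < w₁ ^ (-α) := by
      rw [← hwt]; exact Real.rpow_lt_rpow_of_neg h₁.1 h₁.2 (neg_neg_iff_pos.2 hα)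
    have ht2 : tstar < w₂ ^ (-α) := by
      rw [← hwt]; exact Real.rpow_lt_rpow_of_neg h₂.1 h₂.2 (neg_neg_iff_pos.2 hα)
    have ht12 : w₂ ^ (-α) < w₁ ^ (-α) :=
      Real.rpow_lt_rpow_of_neg h₁.1 hlt (neg_neg_iff_pos.2 hα)
    have := hLanti (Set.mem_Ioi.2 ht2) (Set.mem_Ioi.2 ht1) ht12
    exact mul_lt_mul_of_pos_left (Real.exp_lt_exp.2 this) hα
  · intro w₁ h₁ w₂ h₂ hlt
    have hw₁ : 0 < w₁ := hw0.trans h₁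
    have hw₂ : 0 < w₂ := hw0.trans h₂
    show frechetPDF α w₂ / (1 - frechetCDF α w₂) < frechetPDF α w₁ / (1 - frechetCDF α w₁)
    rw [hazard_eq α w₁ hα hw₁, hazard_eq α w₂ hα hw₂]
    have ht1 : w₁ ^ (-α) < tstar := by
      rw [← hwt]; exact Real.rpow_lt_rpow_of_neg hw0 h₁ (neg_neg_iff_pos.2 hα)
    have ht2 : w₂ ^ (-α) < tstar := by
      rw [← hwt]; exact Real.rpow_lt_rpow_of_neg hw0 h₂ (neg_neg_iff_pos.2 hα)
    have ht12 : w₂ ^ (-α) < w₁ ^ (-α) :=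
      Real.rpow_lt_rpow_of_neg hw₁ hlt (neg_neg_iff_pos.2 hα)
    have htp1 : 0 < w₁ ^ (-α) := Real.rpow_pos_of_pos hw₁ _
    have htp2 : 0 < w₂ ^ (-α) := Real.rpow_pos_of_pos hw₂ _
    have := hLmono (Set.mem_Ioo.2 ⟨htp2, ht2⟩) (Set.mem_Ioo.2 ⟨htp1, ht1⟩) ht12
    exact mul_lt_mul_of_pos_left (Real.exp_lt_exp.2 this) hα
  · rw [hwt]
    have h1 : (0:ℝ) < 1 - Real.exp (-tstar) := by
      nlinarith [Real.exp_pos (-tstar), Real.exp_lt_one_iff.2 (neg_neg_iff_pos.2 hts)]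
    field_simp [hα.ne'] at htval ⊢
    linarith [htval]
end

section
/- Let Λ(w)=exp(−exp(−w)) with density λ = Λ′ and λ′ = Λ″, and let [c̲, c̄] be a finite interval. Suppose (Ĝ_K)_{K≥1} is a sequence of twice continuously differentiable distribution functions such that Ĝ_K → Λ, Ĝ_K′ → λ, and Ĝ_K″ → λ′ uniformly on [c̲, c̄] as K → ∞ (i.e., the sequence lies in the twice differentiable domain of attraction of the Gumbel distribution on this interval). Then there exists K₀ such that for all K > K₀ and all w ∈ [c̲, c̄], the derivative of the virtual valuation is strictly negative: d/dw [ (1 − Ĝ_K(w)) / Ĝ_K′(w) ] < 0. -/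
/-- The standard Gumbel distribution function. -/
noncomputable def gumbelCDF (w : ℝ) : ℝ := Real.exp (-Real.exp (-w))

/-- The standard Gumbel density. -/
noncomputable def gumbelPDF (w : ℝ) : ℝ := Real.exp (-w) * Real.exp (-Real.exp (-w))

lemma gumbelPDF_hasDeriv (w : ℝ) :
    HasDerivAt gumbelPDF (Real.exp (-w) * (Real.exp (-w) - 1) * Real.exp (-Real.exp (-w))) w := by
  have h1 : HasDerivAt (fun w : ℝ => Real.exp (-w)) (-Real.exp (-w)) w := by
    simpa [Function.comp_def] using (Real.hasDerivAt_exp (-w)).comp w ((hasDerivAt_id w).neg)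
  have h2 : HasDerivAt (fun w : ℝ => Real.exp (-Real.exp (-w)))
      (Real.exp (-w) * Real.exp (-Real.exp (-w))) w := by
    have := (Real.hasDerivAt_exp (-Real.exp (-w))).comp w h1.neg
    simpa [mul_comm, Function.comp_def] using this
  have : HasDerivAt gumbelPDF _ w := h1.mul h2
  convert this using 1
  ring

lemma gumbelPDF_deriv : deriv gumbelPDF = fun w =>
    Real.exp (-w) * (Real.exp (-w) - 1) * Real.exp (-Real.exp (-w)) := by
  funext w; exact (gumbelPDF_hasDeriv w).deriv

lemma phi_pos (w : ℝ) :
    0 < gumbelPDF w ^ 2 + (1 - gumbelCDF w) * deriv gumbelPDF w := by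
  rw [gumbelPDF_deriv]
  set t := Real.exp (-w) with ht
  have ht0 : 0 < t := Real.exp_pos _
  have hE : (0:ℝ) < Real.exp (-t) := Real.exp_pos _
  have hlt : -t + 1 < Real.exp (-t) := Real.add_one_lt_exp (by linarith)
  have key : 0 < t - 1 + Real.exp (-t) := by linarith
  have heq : gumbelPDF w ^ 2 + (1 - gumbelCDF w) * (t * (t - 1) * Real.exp (-t))
      = t * Real.exp (-t) * (t - 1 + Real.exp (-t)) := by
    simp only [gumbelPDF, gumbelCDF, ← ht]
    ring
  rw [heq]
  positivity

set_option maxHeartbeats 1600000 in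
/-- If a sequence of twice continuously differentiable distribution functions converges to
the Gumbel distribution uniformly on a finite interval `[c₁, c₂]` together with its first
and second derivatives, then eventually the derivative of the virtual valuation
`(1 − Ĝ_K)/Ĝ_K′` is strictly negative throughout `[c₁, c₂]`. -/
theorem stmt9 (c₁ c₂ : ℝ) (hc : c₁ ≤ c₂)
    (Gs : ℕ → ℝ → ℝ)
    (hsmooth : ∀ K, ContDiff ℝ 2 (Gs K))
    (hmono : ∀ K, Monotone (Gs K))
    (hbot : ∀ K, Filter.Tendsto (Gs K) Filter.atBot (nhds 0))
    (htop : ∀ K, Filter.Tendsto (Gs K) Filter.atTop (nhds 1))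
    (h0 : TendstoUniformlyOn (fun K w => Gs K w) gumbelCDF Filter.atTop (Set.Icc c₁ c₂))
    (h1 : TendstoUniformlyOn (fun K w => deriv (Gs K) w) gumbelPDF Filter.atTop
      (Set.Icc c₁ c₂))
    (h2 : TendstoUniformlyOn (fun K w => deriv (deriv (Gs K)) w) (deriv gumbelPDF)
      Filter.atTop (Set.Icc c₁ c₂)) :
    ∃ K₀ : ℕ, ∀ K, K₀ < K → ∀ w ∈ Set.Icc c₁ c₂,
      deriv (fun u : ℝ => (1 - Gs K u) / deriv (Gs K) u) w < 0 := by
  have hcompact : IsCompact (Set.Icc c₁ c₂) := isCompact_Icc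
  have hne : (Set.Icc c₁ c₂).Nonempty := Set.nonempty_Icc.mpr hc
  have hcontCDF : Continuous gumbelCDF := by unfold gumbelCDF; continuity
  have hcontPDF : Continuous gumbelPDF := by unfold gumbelPDF; continuity
  have hcontdPDF : Continuous (deriv gumbelPDF) := by rw [gumbelPDF_deriv]; continuity
  set φ : ℝ → ℝ := fun w => gumbelPDF w ^ 2 + (1 - gumbelCDF w) * deriv gumbelPDF w with hφ
  have hcontφ : Continuous φ := by
    apply Continuous.add (hcontPDF.pow 2)
    exact (continuous_const.sub hcontCDF).mul hcontdPDF
  obtain ⟨w₁, hw₁, hmin₁⟩ := hcompact.exists_isMinOn hne hcontPDF.continuousOn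
  set m₁ := gumbelPDF w₁ with hm₁
  have hm₁pos : 0 < m₁ := by
    have : 0 < gumbelPDF w₁ := by unfold gumbelPDF; positivity
    exact this
  obtain ⟨w₂, hw₂, hmin₂⟩ := hcompact.exists_isMinOn hne hcontφ.continuousOn
  set m₂ := φ w₂ with hm₂
  have hm₂pos : 0 < m₂ := phi_pos w₂
  obtain ⟨M₀, hM₀⟩ := (hcompact.image (continuous_abs.comp hcontPDF)).bddAbove
  obtain ⟨M₁, hM₁⟩ := (hcompact.image (continuous_abs.comp hcontdPDF)).bddAbove
  obtain ⟨M₂, hM₂⟩ :=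
    (hcompact.image (continuous_abs.comp (continuous_const.sub hcontCDF))).bddAbove
  set M := max 1 (max M₀ (max M₁ M₂)) with hM
  have hM1 : (1:ℝ) ≤ M := le_max_left _ _
  have hMpos : (0:ℝ) < M := lt_of_lt_of_le one_pos hM1
  have hMb : ∀ w ∈ Set.Icc c₁ c₂, |gumbelPDF w| ≤ M ∧ |deriv gumbelPDF w| ≤ M ∧
      |1 - gumbelCDF w| ≤ M := by
    intro w hw
    refine ⟨?_, ?_, ?_⟩
    · exact le_trans (hM₀ ⟨w, hw, rfl⟩)
        (le_trans (le_max_left _ _) (le_max_right 1 _))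
    · exact le_trans (hM₁ ⟨w, hw, rfl⟩)
        (le_trans (le_trans (le_max_left _ _) (le_max_right M₀ _)) (le_max_right 1 _))
    · exact le_trans (hM₂ ⟨w, hw, rfl⟩)
        (le_trans (le_trans (le_max_right M₁ _) (le_max_right M₀ _)) (le_max_right 1 _))
  set ε : ℝ := min 1 (min (m₁ / 2) (m₂ / (7 * M))) with hε
  have hεpos : 0 < ε := by
    apply lt_min one_pos
    apply lt_min (by linarith)
    positivity
  have hε1 : ε ≤ 1 := min_le_left _ _
  have hεm₁ : ε ≤ m₁ / 2 := le_trans (min_le_right _ _) (min_le_left _ _)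
  have hεm₂ : ε ≤ m₂ / (7 * M) := le_trans (min_le_right _ _) (min_le_right _ _)
  have hεM : 7 * M * ε ≤ m₂ := by
    calc 7 * M * ε ≤ 7 * M * (m₂ / (7 * M)) :=
          mul_le_mul_of_nonneg_left hεm₂ (by positivity)
      _ = m₂ := by field_simp
  clear_value m₁ m₂ M ε
  rw [Metric.tendstoUniformlyOn_iff] at h0 h1 h2
  have hev := ((h0 ε hεpos).and ((h1 ε hεpos).and (h2 ε hεpos)))
  rw [Filter.eventually_atTop] at hev
  obtain ⟨K₀, hK₀⟩ := hev
  refine ⟨K₀, fun K hK w hw => ?_⟩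
  obtain ⟨hd0, hd1, hd2⟩ := hK₀ K hK.le
  set a := deriv (Gs K) w with ha
  set b := deriv (deriv (Gs K)) w with hb
  set c := 1 - Gs K w with hcc
  set p := gumbelPDF w with hp
  set q := deriv gumbelPDF w with hq
  set C := 1 - gumbelCDF w with hC
  have hmin₁'0 := hmin₁ hw
  have hmin₂'0 := hmin₂ hw
  clear_value a b c p q C
  have hb0 : |c - C| < ε := by
    have := hd0 w hw; rw [Real.dist_eq] at this
    rw [show c - C = -(Gs K w - gumbelCDF w) by rw [hcc, hC]; ring, abs_neg, abs_sub_comm]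
    exact this
  have hb1 : |a - p| < ε := by
    have := hd1 w hw; rw [Real.dist_eq, abs_sub_comm] at this; rw [ha, hp]; exact this
  have hb2 : |b - q| < ε := by
    have := hd2 w hw; rw [Real.dist_eq, abs_sub_comm] at this; rw [hb, hq]; exact this
  obtain ⟨hMp, hMd, hMc⟩ := hMb w hw
  rw [← hp] at hMp
  rw [← hq] at hMd
  rw [← hC] at hMc
  have hmin₁' : m₁ ≤ p := by rw [hm₁, hp]; exact hmin₁'0
  have hmin₂' : m₂ ≤ p ^ 2 + C * q := by
    rw [hm₂, hp, hq, hC]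
    simpa only [hφ, Set.mem_setOf_eq] using hmin₂'0
  -- positivity of the density of Gs K at w
  have hG'pos : 0 < a := by
    have h₁ : -ε < a - p := (abs_lt.mp hb1).1
    have : ε < m₁ := by linarith
    linarith
  -- key uniform estimate
  have key : |(a ^ 2 + c * b) - (p ^ 2 + C * q)| ≤ 6 * M * ε := by
    have h12 : (a ^ 2 + c * b) - (p ^ 2 + C * q)
        = (a - p) * (a + p) + (c * (b - q) + (c - C) * q) := by ring
    rw [h12]
    have t1 : |(a - p) * (a + p)| ≤ ε * (3 * M) := by
      rw [abs_mul]
      have h₂ : |a + p| ≤ 3 * M := by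
        have : |a + p| = |(a - p) + 2 * p| := by ring_nf
        rw [this]
        calc |(a - p) + 2 * p| ≤ |a - p| + |2 * p| := abs_add_le _ _
          _ ≤ ε + 2 * M := by
              rw [abs_mul]
              have h2e : |(2:ℝ)| = 2 := by norm_num
              rw [h2e]
              have habs : |p| ≤ M := hMp
              linarith [hb1.le]
          _ ≤ 3 * M := by linarith
      exact mul_le_mul hb1.le h₂ (abs_nonneg _) hεpos.le
    have t2 : |c * (b - q)| ≤ (M + 1) * ε := by
      rw [abs_mul]
      have hcb : |c| ≤ M + 1 := by
        calc |c| = |(c - C) + C| := by ring_nf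
          _ ≤ |c - C| + |C| := abs_add_le _ _
          _ ≤ ε + M := by linarith [hb0.le, hMc]
          _ ≤ M + 1 := by linarith
      have := mul_le_mul hcb hb2.le (abs_nonneg _) (by linarith : (0:ℝ) ≤ M + 1)
      linarith
    have t3 : |(c - C) * q| ≤ ε * M := by
      rw [abs_mul]
      exact mul_le_mul hb0.le hMd (abs_nonneg _) hεpos.le
    calc |(a - p) * (a + p) + (c * (b - q) + (c - C) * q)|
        ≤ |(a - p) * (a + p)| + |c * (b - q) + (c - C) * q| := abs_add_le _ _
      _ ≤ |(a - p) * (a + p)| + (|c * (b - q)| + |(c - C) * q|) := by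
          linarith [abs_add_le (c * (b - q)) ((c - C) * q)]
      _ ≤ ε * (3 * M) + ((M + 1) * ε + ε * M) := by linarith
      _ ≤ 6 * M * ε := by nlinarith [mul_nonneg (sub_nonneg.mpr hM1) hεpos.le, hεpos, hM1]
  have hφKpos : 0 < a ^ 2 + c * b := by
    have h₁ := (abs_le.mp key).1
    have hMε : 0 < M * ε := mul_pos hMpos hεpos
    linarith only [h₁, hmin₂', hεM, hMε]
  -- compute the derivative
  have hcd : ContDiff ℝ ((1:ℕ)+1) (Gs K) := by exact_mod_cast hsmooth K
  rw [contDiff_succ_iff_deriv] at hcd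
  have hdiff : DifferentiableAt ℝ (Gs K) w := hcd.1.differentiableAt
  have hdiff' : DifferentiableAt ℝ (deriv (Gs K)) w :=
    (hcd.2.2.differentiable (by norm_num)).differentiableAt
  have hnum : HasDerivAt (fun u => 1 - Gs K u) (-(deriv (Gs K) w)) w :=
    (hdiff.hasDerivAt).const_sub 1
  have hden : HasDerivAt (fun u => deriv (Gs K) u) (deriv (deriv (Gs K)) w) w :=
    hdiff'.hasDerivAt
  have hdd := hnum.div hden (ne_of_gt (show (0:ℝ) < deriv (Gs K) w by rw [← ha]; exact hG'pos))
  rw [show (fun u : ℝ => (1 - Gs K u) / deriv (Gs K) u) = ((fun u => 1 - Gs K u) / fun u => deriv (Gs K) u) from rfl, hdd.deriv]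
  apply div_neg_of_neg_of_pos
  · have : a ^ 2 = a * a := sq a
    rw [← ha, ← hb, ← hcc]
    nlinarith [hφKpos]
  · rw [← ha]; positivity
end

section
/- Let H be a distribution function on [0,v̄) with continuous density h that is positive on (0,v̄), let ϑ(v;H)=(1−H(v))/h(v), and let [a,b] ⊂ (0,v̄) be an interval with H(b) > H(a) on which ϑ(·;H) is nonincreasing. Let x: [0,v̄) → [0,1] be nondecreasing, and define x̃ by x̃(w) = (∫_a^b x(w′)h(w′)dw′) / (H(b)−H(a)) for w ∈ [a,b] and x̃(w) = x(w) otherwise. Then: (i) x̃ is nondecreasing; (ii) ∫₀^{v̄} x̃(v)h(v)dv = ∫₀^{v̄} x(v)h(v)dv; and (iii) ∫₀^{v̄} x̃(v)ϑ(v;H)h(v)dv ≥ ∫₀^{v̄} x(v)ϑ(v;H)h(v)dv. -/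
open MeasureTheory

/-- The averaged ("ironed") allocation rule: on `[a, b]` replace `x` by its average with
respect to the value density `h`, and keep `x` elsewhere. -/
noncomputable def smoothed (a b : ℝ) (H h x : ℝ → ℝ) (w : ℝ) : ℝ :=
  if a ≤ w ∧ w ≤ b then (∫ w' in Set.Icc a b, x w' * h w') / (H b - H a) else x w

/-- Flat-allocation lemma: if the virtual valuation `(1−H)/h` is nonincreasing on
`[a, b] ⊂ (0, v̄)`, then averaging a nondecreasing allocation rule over `[a, b]` keeps it
nondecreasing, preserves the expected allocation (resource constraint), and does not
decrease the residual surplus `∫ x·ϑ·h`. -/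
theorem stmt10 (vbar : EReal) (hvbar : 0 < vbar) (H h : ℝ → ℝ)
    (hH0 : H 0 = 0)
    (hH1 : Filter.Tendsto H
      (Filter.comap (fun v : ℝ => (v : EReal)) (nhdsWithin vbar (Set.Iio vbar))) (nhds 1))
    (hderiv : ∀ v ∈ Sopen vbar, HasDerivAt H (h v) v)
    (hcont : ContinuousOn h (Sfull vbar))
    (hhpos : ∀ v ∈ Sopen vbar, 0 < h v)
    (a b : ℝ) (ha : 0 < a) (hab : a ≤ b) (hb : (b : EReal) < vbar) (hHab : H a < H b)
    (hanti : AntitoneOn (fun v => (1 - H v) / h v) (Set.Icc a b))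
    (x : ℝ → ℝ) (hxmono : MonotoneOn x (Sfull vbar))
    (hxrange : ∀ v ∈ Sfull vbar, x v ∈ Set.Icc (0 : ℝ) 1) :
    MonotoneOn (smoothed a b H h x) (Sfull vbar) ∧
    (∫ v in Sfull vbar, smoothed a b H h x v * h v) = (∫ v in Sfull vbar, x v * h v) ∧
    (∫ v in Sfull vbar, x v * ((1 - H v) / h v) * h v) ≤
      ∫ v in Sfull vbar, smoothed a b H h x v * ((1 - H v) / h v) * h v := by
  classical
  set c : ℝ := (∫ w' in Set.Icc a b, x w' * h w') / (H b - H a) with hc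
  have hIccSopen : Set.Icc a b ⊆ Sopen vbar := fun v hv =>
    ⟨lt_of_lt_of_le ha hv.1, lt_of_le_of_lt (EReal.coe_le_coe_iff.mpr hv.2) hb⟩
  have hIccSfull : Set.Icc a b ⊆ Sfull vbar := fun v hv =>
    ⟨(lt_of_lt_of_le ha hv.1).le, lt_of_le_of_lt (EReal.coe_le_coe_iff.mpr hv.2) hb⟩
  have hhnn : ∀ v ∈ Set.Icc a b, 0 ≤ h v := fun v hv => (hhpos v (hIccSopen hv)).le
  have hHab' : 0 < H b - H a := sub_pos.mpr hHab
  have hcontIcc : ContinuousOn h (Set.Icc a b) := hcont.mono hIccSfull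
  have hInt_h : IntegrableOn h (Set.Icc a b) := hcontIcc.integrableOn_compact isCompact_Icc
  have hFTC : (∫ v in Set.Icc a b, h v) = H b - H a := by
    rw [MeasureTheory.integral_Icc_eq_integral_Ioc, ← intervalIntegral.integral_of_le hab]
    exact intervalIntegral.integral_eq_sub_of_hasDerivAt
      (fun t ht => hderiv t (hIccSopen (by rwa [Set.uIcc_of_le hab] at ht)))
      (hcontIcc.intervalIntegrable_of_Icc hab)
  have hInt_x : IntegrableOn x (Set.Icc a b) :=
    (hxmono.mono hIccSfull).integrableOn_isCompact isCompact_Icc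
  have hInt_xh : IntegrableOn (fun v => x v * h v) (Set.Icc a b) :=
    hInt_x.mul_continuousOn hcontIcc isCompact_Icc
  have hInt_cx : IntegrableOn (fun v => c - x v) (Set.Icc a b) := by
    have h0 : IntegrableOn (fun _ : ℝ => c) (Set.Icc a b) volume :=
      (integrableOn_const_iff).mpr (Or.inr measure_Icc_lt_top)
    exact h0.sub hInt_x
  have hInt_cxh : IntegrableOn (fun v => (c - x v) * h v) (Set.Icc a b) :=
    hInt_cx.mul_continuousOn hcontIcc isCompact_Icc
  -- value of the average
  have hcval : c * (H b - H a) = ∫ v in Set.Icc a b, x v * h v := by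
    rw [hc, div_mul_cancel₀ _ hHab'.ne']
  have hIcc0 : (∫ v in Set.Icc a b, (c - x v) * h v) = 0 := by
    have : (∫ v in Set.Icc a b, (c - x v) * h v)
        = (∫ v in Set.Icc a b, c * h v) - ∫ v in Set.Icc a b, x v * h v := by
      rw [← integral_sub (hInt_h.const_mul c) hInt_xh]
      congr 1; funext v; ring
    rw [this, MeasureTheory.integral_const_mul, hFTC, hcval, sub_self]
  -- bounds on the average
  have hlow : ∀ w ∈ Sfull vbar, w ≤ a → x w ≤ c := by
    intro w hw hwa
    rw [hc, le_div_iff₀ hHab']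
    calc x w * (H b - H a) = ∫ v in Set.Icc a b, x w * h v := by
          rw [MeasureTheory.integral_const_mul, hFTC]
      _ ≤ ∫ v in Set.Icc a b, x v * h v :=
          setIntegral_mono_on (hInt_h.const_mul _) hInt_xh measurableSet_Icc
            (fun v hv => mul_le_mul_of_nonneg_right
              (hxmono hw (hIccSfull hv) (hwa.trans hv.1)) (hhnn v hv))
  have hhigh : ∀ w ∈ Sfull vbar, b ≤ w → c ≤ x w := by
    intro w hw hbw
    rw [hc, div_le_iff₀ hHab']
    calc (∫ v in Set.Icc a b, x v * h v)
        ≤ ∫ v in Set.Icc a b, x w * h v :=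
          setIntegral_mono_on hInt_xh (hInt_h.const_mul _) measurableSet_Icc
            (fun v hv => mul_le_mul_of_nonneg_right
              (hxmono (hIccSfull hv) hw (hv.2.trans hbw)) (hhnn v hv))
      _ = x w * (H b - H a) := by rw [MeasureTheory.integral_const_mul, hFTC]
  -- smoothed is if-then-else with c
  have hsm : ∀ v, smoothed a b H h x v = if a ≤ v ∧ v ≤ b then c else x v := by
    intro v; rw [smoothed, hc]
  -- Part (i): monotonicity
  have part1 : MonotoneOn (smoothed a b H h x) (Sfull vbar) := by
    intro w1 h1 w2 h2 h12
    rw [hsm, hsm]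
    by_cases c1 : a ≤ w1 ∧ w1 ≤ b <;> by_cases c2 : a ≤ w2 ∧ w2 ≤ b
    · rw [if_pos c1, if_pos c2]
    · rw [if_pos c1, if_neg c2]
      have : b < w2 := by
        by_contra hcon; push_neg at hcon
        exact c2 ⟨c1.1.trans h12, hcon⟩
      exact hhigh w2 h2 this.le
    · rw [if_neg c1, if_pos c2]
      have : w1 ≤ a := by
        by_contra hcon; push_neg at hcon
        exact c1 ⟨hcon.le, h12.trans c2.2⟩
      exact hlow w1 h1 this
    · rw [if_neg c1, if_neg c2]
      exact hxmono h1 h2 h12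
  -- decomposition
  have hdecomp : ∀ g : ℝ → ℝ, ∀ v, smoothed a b H h x v * g v
      = x v * g v + Set.indicator (Set.Icc a b) (fun v => (c - x v) * g v) v := by
    intro g v
    rw [hsm, Set.indicator_apply]
    by_cases hv : v ∈ Set.Icc a b
    · rw [if_pos (Set.mem_Icc.mp hv), if_pos hv]; ring
    · rw [if_neg (fun hcc => hv (Set.mem_Icc.mpr hcc)), if_neg hv]; ring
  -- combination lemma
  have comb : ∀ g : ℝ → ℝ, IntegrableOn (fun v => (c - x v) * g v) (Set.Icc a b) →
      ((∫ v in Sfull vbar, smoothed a b H h x v * g v)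
        = (∫ v in Sfull vbar, x v * g v) + ∫ v in Set.Icc a b, (c - x v) * g v)
      ∨ ((∫ v in Sfull vbar, smoothed a b H h x v * g v) = 0
        ∧ (∫ v in Sfull vbar, x v * g v) = 0) := by
    intro g hd
    set d := Set.indicator (Set.Icc a b) (fun v => (c - x v) * g v) with hdDef
    have hdint : Integrable d (volume.restrict (Sfull vbar)) := by
      rw [hdDef, integrable_indicator_iff measurableSet_Icc, IntegrableOn,
        Measure.restrict_restrict measurableSet_Icc,
        Set.inter_eq_self_of_subset_left hIccSfull]
      exact hd
    have hdi : (∫ v in Sfull vbar, d v) = ∫ v in Set.Icc a b, (c - x v) * g v := by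
      rw [hdDef, integral_indicator measurableSet_Icc,
        Measure.restrict_restrict measurableSet_Icc,
        Set.inter_eq_self_of_subset_left hIccSfull]
    by_cases hxg : Integrable (fun v => x v * g v) (volume.restrict (Sfull vbar))
    · left
      have heq : (fun v => smoothed a b H h x v * g v) = fun v => x v * g v + d v :=
        funext fun v => hdecomp g v
      calc (∫ v in Sfull vbar, smoothed a b H h x v * g v)
          = ∫ v in Sfull vbar, (x v * g v + d v) := by rw [heq]
        _ = (∫ v in Sfull vbar, x v * g v) + ∫ v in Sfull vbar, d v :=
            integral_add hxg hdint
        _ = (∫ v in Sfull vbar, x v * g v) + ∫ v in Set.Icc a b, (c - x v) * g v := by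
            rw [hdi]
    · right
      refine ⟨integral_undef fun hcon => hxg ?_, integral_undef hxg⟩
      have heq : (fun v => x v * g v) = fun v => smoothed a b H h x v * g v - d v := by
        funext v; rw [hdecomp g v]; ring
      rw [heq]; exact hcon.sub hdint
  -- Part (ii)
  have part2 : (∫ v in Sfull vbar, smoothed a b H h x v * h v)
      = ∫ v in Sfull vbar, x v * h v := by
    rcases comb h hInt_cxh with heq | ⟨h1, h2⟩
    · rw [heq, hIcc0, add_zero]
    · rw [h1, h2]
  -- Part (iii)
  have hϑh : ∀ v ∈ Set.Icc a b, (1 - H v) / h v * h v = 1 - H v := by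
    intro v hv; rw [div_mul_cancel₀ _ (hhpos v (hIccSopen hv)).ne']
  have hcontH : ContinuousOn (fun v => 1 - H v) (Set.Icc a b) := by
    have : ∀ v ∈ Set.Icc a b, HasDerivAt H (h v) v := fun v hv => hderiv v (hIccSopen hv)
    exact (continuousOn_const.sub fun v hv => ((this v hv).continuousAt).continuousWithinAt)
  have hInt_g3 : IntegrableOn (fun v => (c - x v) * ((1 - H v) / h v * h v))
      (Set.Icc a b) := by
    refine (IntegrableOn.mul_continuousOn hInt_cx hcontH isCompact_Icc).congr_fun
      (fun v hv => ?_) measurableSet_Icc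
    rw [hϑh v hv]
  -- the ironing point
  have hSne : a ∈ {v ∈ Set.Icc a b | x v ≤ c} :=
    ⟨⟨le_refl a, hab⟩, hlow a (hIccSfull ⟨le_refl a, hab⟩) (le_refl a)⟩
  have hbdd : BddAbove {v ∈ Set.Icc a b | x v ≤ c} := ⟨b, fun v hv => hv.1.2⟩
  set vs := sSup {v ∈ Set.Icc a b | x v ≤ c} with hvs
  have hvs_mem : vs ∈ Set.Icc a b :=
    ⟨le_csSup hbdd hSne, csSup_le ⟨a, hSne⟩ fun v hv => hv.1.2⟩
  have hpt : ∀ v ∈ Set.Icc a b,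
      0 ≤ ((1 - H v) / h v - (1 - H vs) / h vs) * ((c - x v) * h v) := by
    intro v hv
    rcases lt_trichotomy v vs with h1 | h1 | h1
    · have hxvc : x v ≤ c := by
        obtain ⟨u, huS, hu⟩ := exists_lt_of_lt_csSup ⟨a, hSne⟩ h1
        exact (hxmono (hIccSfull hv) (hIccSfull huS.1) hu.le).trans huS.2
      have hth : (1 - H vs) / h vs ≤ (1 - H v) / h v := hanti hv hvs_mem h1.le
      exact mul_nonneg (sub_nonneg.mpr hth)
        (mul_nonneg (sub_nonneg.mpr hxvc) (hhnn v hv))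
    · rw [h1]; simp
    · have hxvc : c ≤ x v := by
        by_contra hcon; push_neg at hcon
        exact absurd (le_csSup hbdd ⟨hv, hcon.le⟩) (not_le.mpr h1)
      have hth : (1 - H v) / h v ≤ (1 - H vs) / h vs := hanti hvs_mem hv h1.le
      exact mul_nonneg_of_nonpos_of_nonpos (sub_nonpos.mpr hth)
        (mul_nonpos_iff.mpr (Or.inr ⟨sub_nonpos.mpr hxvc, hhnn v hv⟩))
  have hnn : 0 ≤ ∫ v in Set.Icc a b,
      ((1 - H v) / h v - (1 - H vs) / h vs) * ((c - x v) * h v) :=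
    setIntegral_nonneg measurableSet_Icc hpt
  have hd3nn : 0 ≤ ∫ v in Set.Icc a b, (c - x v) * ((1 - H v) / h v * h v) := by
    have heq : (fun v => ((1 - H v) / h v - (1 - H vs) / h vs) * ((c - x v) * h v))
        = fun v => (c - x v) * ((1 - H v) / h v * h v)
          - (1 - H vs) / h vs * ((c - x v) * h v) := by
      funext v; ring
    rw [heq] at hnn
    rw [integral_sub hInt_g3 (hInt_cxh.const_mul _), MeasureTheory.integral_const_mul,
      hIcc0, mul_zero, sub_zero] at hnn
    exact hnn
  have part3 : (∫ v in Sfull vbar, x v * ((1 - H v) / h v) * h v)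
      ≤ ∫ v in Sfull vbar, smoothed a b H h x v * ((1 - H v) / h v) * h v := by
    have hassoc1 : (∫ v in Sfull vbar, x v * ((1 - H v) / h v) * h v)
        = ∫ v in Sfull vbar, x v * ((1 - H v) / h v * h v) := by
      simp only [mul_assoc]
    have hassoc2 : (∫ v in Sfull vbar, smoothed a b H h x v * ((1 - H v) / h v) * h v)
        = ∫ v in Sfull vbar, smoothed a b H h x v * ((1 - H v) / h v * h v) := by
      simp only [mul_assoc]
    rw [hassoc1, hassoc2]
    rcases comb (fun v => (1 - H v) / h v * h v) hInt_g3 with heq | ⟨h1, h2⟩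
    · rw [heq]; linarith
    · rw [h1, h2]
  exact ⟨part1, part2, part3⟩
end

section
/- Let h: [0,1] → ℝ be continuous, and suppose there exists q* ∈ (0,1) such that h is nonincreasing on [0,q*] and nondecreasing on [q*,1]. Define H(q) = ∫₀^q h(r)dr, and suppose q** ∈ (q*,1) satisfies H(q**) = q**·h(q**). Define I(q) = (H(q**)/q**)·q for q ∈ [0,q**] and I(q) = H(q) for q ∈ (q**,1]. Then I is the convex hull of H on [0,1]: I is convex, I(q) ≤ H(q) for all q ∈ [0,1], and every convex function J: [0,1] → ℝ with J ≤ H satisfies J ≤ I. (Taking h(q) = ϑ(H_0^{-1}(q); H_0) for a reduced value distribution H_0 with an IDHR, this yields that the ironed virtual valuation equals ϑ(w**;H_0) for w ∈ [0,w**] and ϑ(w;H_0) for w > w**, where w** = H_0^{-1}(q**).) -/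
open MeasureTheory Set

/-- Myerson ironing for an IDHR quantile-virtual-value: if `h` is nonincreasing on
`[0,q*]` and nondecreasing on `[q*,1]`, `H(q) = ∫₀^q h`, and `q** ∈ (q*,1)` satisfies
`H(q**) = q**·h(q**)`, then the function equal to the line `(H(q**)/q**)·q` on `[0,q**]`
and to `H` on `(q**,1]` is the convex hull (largest convex minorant) of `H` on `[0,1]`. -/
theorem stmt12 (h : ℝ → ℝ) (hcont : ContinuousOn h (Set.Icc 0 1))
    (qstar : ℝ) (hqstar : qstar ∈ Set.Ioo (0 : ℝ) 1)
    (hdec : AntitoneOn h (Set.Icc 0 qstar))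
    (hinc : MonotoneOn h (Set.Icc qstar 1))
    (qss : ℝ) (hqss : qss ∈ Set.Ioo qstar 1)
    (htan : (∫ r in (0:ℝ)..qss, h r) = qss * h qss) :
    ConvexOn ℝ (Set.Icc 0 1)
      (fun q : ℝ => if q ≤ qss then ((∫ r in (0:ℝ)..qss, h r) / qss) * q
        else ∫ r in (0:ℝ)..q, h r) ∧
    (∀ q ∈ Set.Icc (0:ℝ) 1,
      (if q ≤ qss then ((∫ r in (0:ℝ)..qss, h r) / qss) * q else ∫ r in (0:ℝ)..q, h r)
        ≤ ∫ r in (0:ℝ)..q, h r) ∧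
    ∀ J : ℝ → ℝ, ConvexOn ℝ (Set.Icc 0 1) J →
      (∀ q ∈ Set.Icc (0:ℝ) 1, J q ≤ ∫ r in (0:ℝ)..q, h r) →
      ∀ q ∈ Set.Icc (0:ℝ) 1,
        J q ≤ (if q ≤ qss then ((∫ r in (0:ℝ)..qss, h r) / qss) * q
          else ∫ r in (0:ℝ)..q, h r) := by
  obtain ⟨hqs0, hqs1⟩ := hqstar
  obtain ⟨hss1, hss2⟩ := hqss
  have hq0 : (0:ℝ) < qss := hqs0.trans hss1
  set c : ℝ := (∫ r in (0:ℝ)..qss, h r) / qss with hc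
  have hcval : c = h qss := by rw [hc, htan]; field_simp
  have hHss : (∫ r in (0:ℝ)..qss, h r) = c * qss := by
    rw [hc]; field_simp
  -- integrability
  have hint : ∀ a b : ℝ, a ∈ Set.Icc (0:ℝ) 1 → b ∈ Set.Icc (0:ℝ) 1 →
      IntervalIntegrable h volume a b := by
    intro a b ha hb
    exact (hcont.mono (Set.uIcc_subset_Icc ha hb)).intervalIntegrable
  -- derivative of the primitive
  have Hderiv : ∀ r ∈ Set.Ioo (0:ℝ) 1,
      HasDerivAt (fun q => ∫ t in (0:ℝ)..q, h t) (h r) r := by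
    intro r hr
    have hmem : Set.Icc (0:ℝ) 1 ∈ nhds r := Icc_mem_nhds hr.1 hr.2
    exact intervalIntegral.integral_hasDerivAt_right
      (hint 0 r ⟨le_rfl, zero_le_one⟩ ⟨hr.1.le, hr.2.le⟩)
      ⟨Set.Icc 0 1, hmem, hcont.aestronglyMeasurable measurableSet_Icc⟩
      (hcont.continuousAt hmem)
  -- continuity of the primitive
  have Hcont : ContinuousOn (fun q => ∫ t in (0:ℝ)..q, h t) (Set.Icc 0 1) := by
    have hIO : IntegrableOn h (Set.uIcc (0:ℝ) 1) volume := by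
      rw [Set.uIcc_of_le zero_le_one]
      exact hcont.integrableOn_Icc
    have := intervalIntegral.continuousOn_primitive_interval (a := (0:ℝ)) (b := 1) hIO
    rwa [Set.uIcc_of_le zero_le_one] at this
  have lineD : ∀ r : ℝ, HasDerivAt (fun q : ℝ => c * q) c r := fun r => by
    simpa using (hasDerivAt_id r).const_mul c
  have gderiv : ∀ r ∈ Set.Ioo (0:ℝ) 1,
      HasDerivAt (fun q => (∫ t in (0:ℝ)..q, h t) - c * q) (h r - c) r :=
    fun r hr => (Hderiv r hr).sub (lineD r)
  have gcont : ContinuousOn (fun q => (∫ t in (0:ℝ)..q, h t) - c * q) (Set.Icc 0 1) :=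
    Hcont.sub ((continuous_const.mul continuous_id).continuousOn)
  -- Key: the line lies below H on [0, qss]
  have key2 : ∀ q ∈ Set.Icc (0:ℝ) qss, c * q ≤ ∫ t in (0:ℝ)..q, h t := by
    intro q hq
    by_cases hcs : c < h q
    · -- then q ≤ qstar and h ≥ c on [0,q], so g is monotone on [0,q]
      have hqle : q ≤ qstar := by
        by_contra hgt
        push_neg at hgt
        have : h q ≤ h qss :=
          hinc ⟨hgt.le, hq.2.trans hss2.le⟩ ⟨hss1.le, hss2.le⟩ hq.2
        rw [hcval] at hcs; linarith
      have hmono : MonotoneOn (fun x => (∫ t in (0:ℝ)..x, h t) - c * x) (Set.Icc 0 q) := by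
        apply monotoneOn_of_deriv_nonneg (convex_Icc 0 q)
        · exact gcont.mono (Set.Icc_subset_Icc le_rfl (hq.2.trans hss2.le))
        · intro x hx
          rw [interior_Icc] at hx
          exact (gderiv x ⟨hx.1, hx.2.trans_le (hq.2.trans hss2.le)⟩).differentiableAt.differentiableWithinAt
        · intro x hx
          rw [interior_Icc] at hx
          rw [(gderiv x ⟨hx.1, hx.2.trans_le (hq.2.trans hss2.le)⟩).deriv]
          have : h q ≤ h x := hdec ⟨hx.1.le, hx.2.le.trans hqle⟩ ⟨hq.1, hqle⟩ hx.2.le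
          linarith
      have h01 : ((∫ t in (0:ℝ)..(0:ℝ), h t) - c * 0) ≤ ((∫ t in (0:ℝ)..q, h t) - c * q) :=
        hmono ⟨le_rfl, hq.1⟩ ⟨hq.1, le_rfl⟩ hq.1
      simp only [intervalIntegral.integral_same, mul_zero, sub_zero] at h01
      linarith
    · push_neg at hcs
      -- h ≤ c on [q, qss], so g is antitone there, and g qss = 0
      have hanti : AntitoneOn (fun x => (∫ t in (0:ℝ)..x, h t) - c * x) (Set.Icc q qss) := by
        apply antitoneOn_of_deriv_nonpos (convex_Icc q qss)
        · exact gcont.mono (Set.Icc_subset_Icc hq.1 hss2.le)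
        · intro x hx
          rw [interior_Icc] at hx
          exact (gderiv x ⟨hq.1.trans_lt hx.1, hx.2.trans hss2⟩).differentiableAt.differentiableWithinAt
        · intro x hx
          rw [interior_Icc] at hx
          rw [(gderiv x ⟨hq.1.trans_lt hx.1, hx.2.trans hss2⟩).deriv]
          by_cases hxs : x ≤ qstar
          · have : h x ≤ h q :=
              hdec ⟨hq.1, hx.1.le.trans hxs⟩ ⟨hq.1.trans hx.1.le, hxs⟩ hx.1.le
            linarith
          · push_neg at hxs
            have : h x ≤ h qss :=
              hinc ⟨hxs.le, (hx.2.trans hss2).le⟩ ⟨hss1.le, hss2.le⟩ hx.2.le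
            rw [hcval]; linarith
      have h01 : ((∫ t in (0:ℝ)..qss, h t) - c * qss) ≤ ((∫ t in (0:ℝ)..q, h t) - c * q) :=
        hanti ⟨le_rfl, hq.2⟩ ⟨hq.2, le_rfl⟩ hq.2
      rw [hHss] at h01
      linarith
  -- derivative of the ironed function
  have Ideriv : ∀ r ∈ Set.Ioo (0:ℝ) 1,
      HasDerivAt (fun q : ℝ => if q ≤ qss then c * q else ∫ t in (0:ℝ)..q, h t)
        (if r ≤ qss then c else h r) r := by
    intro r hr
    rcases lt_trichotomy r qss with hlt | heq | hgt
    · rw [if_pos hlt.le]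
      refine (lineD r).congr_of_eventuallyEq ?_
      filter_upwards [Iio_mem_nhds hlt] with x hx
      rw [if_pos (le_of_lt hx)]
    · rw [heq] at hr ⊢
      rw [if_pos le_rfl]
      have left : HasDerivWithinAt
          (fun q : ℝ => if q ≤ qss then c * q else ∫ t in (0:ℝ)..q, h t) c (Set.Iic qss) qss := by
        refine (lineD qss).hasDerivWithinAt.congr (fun x hx => ?_) (by rw [if_pos le_rfl])
        rw [if_pos (Set.mem_Iic.mp hx)]
      have right : HasDerivWithinAt
          (fun q : ℝ => if q ≤ qss then c * q else ∫ t in (0:ℝ)..q, h t) c (Set.Ici qss) qss := by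
        have hd := (Hderiv qss hr).hasDerivWithinAt (s := Set.Ici qss)
        rw [← hcval] at hd
        refine hd.congr (fun x hx => ?_) ?_
        · rcases eq_or_lt_of_le (Set.mem_Ici.mp hx) with heq2 | hlt2
          · rw [← heq2, if_pos le_rfl, hHss]
          · rw [if_neg (not_le.mpr hlt2)]
        · rw [if_pos le_rfl, hHss]
      have := left.union right
      rw [Set.Iic_union_Ici] at this
      exact hasDerivWithinAt_univ.mp this
    · rw [if_neg (not_le.mpr hgt)]
      refine (Hderiv r hr).congr_of_eventuallyEq ?_
      filter_upwards [Ioi_mem_nhds hgt] with x hx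
      rw [if_neg (not_le.mpr hx)]
  refine ⟨?_, ?_, ?_⟩
  · -- convexity
    apply MonotoneOn.convexOn_of_deriv (convex_Icc 0 1)
    · apply ContinuousOn.if
      · intro a ha
        have hfr : a ∈ frontier (Set.Iic qss) := ha.2
        rw [frontier_Iic] at hfr
        rw [Set.mem_singleton_iff] at hfr
        subst hfr
        rw [hHss]
      · exact (continuous_const.mul continuous_id).continuousOn.mono Set.inter_subset_left
      · exact Hcont.mono Set.inter_subset_left
    · intro x hx
      rw [interior_Icc] at hx
      exact (Ideriv x hx).differentiableAt.differentiableWithinAt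
    · intro x hx y hy hxy
      rw [interior_Icc] at hx hy
      rw [(Ideriv x hx).deriv, (Ideriv y hy).deriv]
      split_ifs with h1 h2 h2
      · exact le_rfl
      · rw [hcval]
        exact hinc ⟨hss1.le, hss2.le⟩ ⟨hss1.le.trans (not_le.mp h2).le, hy.2.le⟩
          (not_le.mp h2).le
      · exact absurd (hxy.trans h2) h1
      · exact hinc ⟨hss1.le.trans (not_le.mp h1).le, hx.2.le⟩
          ⟨hss1.le.trans (not_le.mp h2).le, hy.2.le⟩ hxy
  · -- minorant
    intro q hq
    split_ifs with hcase
    · exact key2 q ⟨hq.1, hcase⟩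
    · exact le_rfl
  · -- largest convex minorant
    intro J hJ hJle q hq
    split_ifs with hcase
    · have h0 : J 0 ≤ 0 := by simpa using hJle 0 ⟨le_rfl, zero_le_one⟩
      have hs : J qss ≤ c * qss := by
        rw [← hHss]; exact hJle qss ⟨hq0.le, hss2.le⟩
      set t : ℝ := q / qss with ht
      have ht0 : 0 ≤ t := div_nonneg hq.1 hq0.le
      have ht1 : t ≤ 1 := (div_le_one hq0).mpr hcase
      have htq : t * qss = q := div_mul_cancel₀ q hq0.ne'
      have hcomb := hJ.2 (Set.left_mem_Icc.mpr zero_le_one) (⟨hq0.le, hss2.le⟩ : qss ∈ Set.Icc (0:ℝ) 1)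
        (by linarith : (0:ℝ) ≤ 1 - t) ht0 (by ring)
      simp only [smul_eq_mul, mul_zero, zero_add] at hcomb
      rw [htq] at hcomb
      have e1 : (1 - t) * J 0 ≤ 0 :=
        mul_nonpos_of_nonneg_of_nonpos (by linarith) h0
      have e2 : t * J qss ≤ t * (c * qss) := mul_le_mul_of_nonneg_left hs ht0
      have e3 : t * (c * qss) = c * q := by rw [← htq]; ring
      linarith
    · exact hJle q hq
end

section
/- Let m₁ ≥ m₂ > 0 with m₁ + m₂ ≤ 1, and set a = m₁ + √(m₁m₂), b = m₂ + √(m₁m₂). Then the residual surplus of the market-clearing random-favorites mechanism under i.i.d. standard exponential values satisfies a·∫₀^∞ v(1 − e^{−(a/b)v})e^{−v}dv + b·∫₀^∞ v(1 − e^{−(b/a)v})e^{−v}dv = m₁ + m₂ + √(m₁m₂). -/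
open MeasureTheory

lemma intk_aux (k : ℝ) (hk : 0 < k) :
    IntegrableOn (fun v : ℝ => v * Real.exp (-(k * v))) (Set.Ioi 0) := by
  have h := integrableOn_rpow_mul_exp_neg_mul_rpow (p := 1) (s := 1) (b := k)
    (by norm_num) one_pos hk
  simpa [Real.rpow_one] using h

lemma key_aux (k : ℝ) (hk : 0 < k) :
    ∫ v in Set.Ioi (0 : ℝ), v * Real.exp (-(k * v)) = (1 / k) ^ 2 := by
  have h := Real.integral_rpow_mul_exp_neg_mul_Ioi (a := 2) (r := k) (by norm_num) hk
  have h2 : ((2 : ℝ) - 1) = (1 : ℝ) := by norm_num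
  rw [h2] at h
  simp only [Real.rpow_one] at h
  rw [h, Real.Gamma_two]
  rw [show ((2:ℝ)) = ((2:ℕ):ℝ) by norm_num, Real.rpow_natCast]
  ring

lemma piece_aux (c : ℝ) (hc : 0 < c) :
    ∫ v in Set.Ioi (0 : ℝ), v * (1 - Real.exp (-c * v)) * Real.exp (-v)
      = 1 - (1 / (1 + c)) ^ 2 := by
  have h1 : (1 : ℝ) < 1 + c := by linarith
  have heq : ∀ v ∈ Set.Ioi (0 : ℝ),
      v * (1 - Real.exp (-c * v)) * Real.exp (-v)
        = v * Real.exp (-(1 * v)) - v * Real.exp (-((1 + c) * v)) := by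
    intro v _
    rw [show -((1 + c) * v) = -c * v + -v by ring, Real.exp_add]
    ring
  rw [setIntegral_congr_fun measurableSet_Ioi heq,
    integral_sub (intk_aux 1 one_pos) (intk_aux (1 + c) (by linarith)),
    key_aux 1 one_pos, key_aux (1 + c) (by linarith)]
  norm_num

/-- The residual surplus of the market-clearing random-favorites mechanism with two object
types of capacities `(m₁, m₂)` and i.i.d. standard exponential values equals
`m₁ + m₂ + √(m₁m₂)`. -/
theorem stmt17 (m₁ m₂ : ℝ) (h21 : m₂ ≤ m₁) (h2 : 0 < m₂) (hsum : m₁ + m₂ ≤ 1)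
    (a b : ℝ) (ha : a = m₁ + Real.sqrt (m₁ * m₂)) (hb : b = m₂ + Real.sqrt (m₁ * m₂)) :
    a * (∫ v in Set.Ioi (0 : ℝ), v * (1 - Real.exp (-(a / b) * v)) * Real.exp (-v))
      + b * (∫ v in Set.Ioi (0 : ℝ), v * (1 - Real.exp (-(b / a) * v)) * Real.exp (-v))
      = m₁ + m₂ + Real.sqrt (m₁ * m₂) := by
  have h1 : 0 < m₁ := lt_of_lt_of_le h2 h21
  set s := Real.sqrt (m₁ * m₂) with hs
  have hs0 : 0 < s := Real.sqrt_pos.mpr (by positivity)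
  have hs2 : s ^ 2 = m₁ * m₂ := Real.sq_sqrt (by positivity)
  have hapos : 0 < a := by rw [ha]; linarith
  have hbpos : 0 < b := by rw [hb]; linarith
  rw [piece_aux _ (div_pos hapos hbpos), piece_aux _ (div_pos hbpos hapos)]
  have hab : a * b = s * (a + b) := by rw [ha, hb]; nlinarith [hs2]
  have hab0 : 0 < a + b := by linarith
  have hgoal : a + b - s = m₁ + m₂ + s := by rw [ha, hb]; ring
  rw [← hgoal]
  field_simp
  linear_combination (-(a + b) ^ 3) * hab
end
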